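/- arXiv:1208.6173 — 6 statements merged into one kernel-verified Lean document; each statement's English description precedes it below -/
import Mathlib

section
/- For every h ≥ 1 and k ≥ 0, twice the number B(h,k) of 'sectionally inverse or equal' equivalence classes of permutations of {1,…,h} with k inversions equals the sum over s = 1,…,h and t = 0,…,k of (I(s,t) + IT(s,t)) · B(h−s, k−t), where I(s,t) is the number of irreducible permutations of {1,…,s} with t inversions and IT(s,t) is the number of irreducible involutions of {1,…,s} with t inversions. -/
/-- The number of inversions of a permutation of `{1,…,h}` (represented as `Fin h`). -/
def invNum {h : ℕ} (π : Equiv.Perm (Fin h)) : ℕ :=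
  (Finset.univ.filter fun p : Fin h × Fin h => p.1 < p.2 ∧ π p.2 < π p.1).card

/-- A permutation of `{1,…,h}` is irreducible if no proper nonempty initial interval
`{1,…,u}` (with `1 ≤ u < h`) is closed under it. -/
def IrredPerm {h : ℕ} (π : Equiv.Perm (Fin h)) : Prop :=
  ¬ ∃ u : ℕ, 0 < u ∧ u < h ∧ ∀ i : Fin h, i.val < u → (π i).val < u

/-- `P(h,k)`: the number of permutations of `{1,…,h}` with exactly `k` inversions. -/
noncomputable def permCount (h k : ℕ) : ℕ :=
  Nat.card {π : Equiv.Perm (Fin h) // invNum π = k}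

/-- `I(h,k)`: the number of irreducible permutations of `{1,…,h}` with `k` inversions. -/
noncomputable def irrCount (h k : ℕ) : ℕ :=
  Nat.card {π : Equiv.Perm (Fin h) // IrredPerm π ∧ invNum π = k}

/-- `T(h,k)`: the number of involutions of `{1,…,h}` with `k` inversions. -/
noncomputable def invoCount (h k : ℕ) : ℕ :=
  Nat.card {π : Equiv.Perm (Fin h) // π * π = 1 ∧ invNum π = k}

/-- `IT(h,k)`: the number of irreducible involutions of `{1,…,h}` with `k` inversions. -/
noncomputable def irrInvoCount (h k : ℕ) : ℕ :=
  Nat.card {π : Equiv.Perm (Fin h) // π * π = 1 ∧ IrredPerm π ∧ invNum π = k}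

/-- A section of a permutation of `{1,…,h}`: a nonempty interval `[u,v]` such that
`[1,u-1]`, `[u,v]` and `[v+1,h]` are all closed under the permutation.
(Here `Fin h` represents `{1,…,h}`, the element `i : Fin h` standing for `i.val + 1`.) -/
def IsSection {h : ℕ} (π : Equiv.Perm (Fin h)) (A : Set (Fin h)) : Prop :=
  ∃ u v : ℕ, u ≤ v ∧ v < h ∧ A = {i : Fin h | u ≤ i.val ∧ i.val ≤ v} ∧
    (∀ i : Fin h, i.val < u → (π i).val < u) ∧
    (∀ i : Fin h, u ≤ i.val → i.val ≤ v → u ≤ (π i).val ∧ (π i).val ≤ v) ∧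
    (∀ i : Fin h, v < i.val → v < (π i).val)

/-- A segment of a permutation: a section that is minimal with respect to inclusion. -/
def IsSegment {h : ℕ} (π : Equiv.Perm (Fin h)) (A : Set (Fin h)) : Prop :=
  IsSection π A ∧ ∀ B, IsSection π B → B ⊆ A → B = A

/-- Two permutations are sectionally inverse or equal: they have the same segments, and on
each segment the first one restricts either to the restriction of the second one or to the
restriction of its inverse. -/
def SIE {h : ℕ} (σ π : Equiv.Perm (Fin h)) : Prop :=
  (∀ A, IsSegment σ A ↔ IsSegment π A) ∧
  ∀ A, IsSegment π A → (∀ i ∈ A, σ i = π i) ∨ (∀ i ∈ A, σ i = π⁻¹ i)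

/-- `B(h,k)`: the number of equivalence classes of the "sectionally inverse or equal"
relation on permutations of `{1,…,h}` consisting of permutations with `k` inversions. -/
noncomputable def bCount (h k : ℕ) : ℕ :=
  Set.ncard {C : Set (Equiv.Perm (Fin h)) | ∃ π, invNum π = k ∧ C = {σ | SIE σ π}}

/-!
Every permutation `π` of `{1,…,h}`, `h ≥ 1`, is the direct sum `ρ ⊕ τ` of an irreducible
permutation `ρ` of its first segment `{1,…,s}` and a permutation `τ` of the remaining `h - s`
points, and `inv π = inv ρ + inv τ`. The segments of `ρ ⊕ τ` are `{1,…,s}` and the shifted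
segments of `τ`, so `ρ ⊕ τ` and `ρ' ⊕ τ'` (with `ρ'` irreducible too) are sectionally inverse or
equal iff `s = s'`, `ρ' ∈ {ρ, ρ⁻¹}` and `τ'`, `τ` are. Hence the classes whose first segment has
length `s` and carries `t` inversions are the pairs (orbit `{ρ, ρ⁻¹}`, class of `τ`), and twice
the number of orbits `{ρ, ρ⁻¹}` of irreducible `ρ` with `t` inversions is `I(s,t) + IT(s,t)`:
involutions form orbits of size one and are counted by both terms.
-/

open Equiv Set

variable {n s m : ℕ}

open Finset in
/-- Orbits `{a, ι a}` of size two are counted twice by `Nat.card α`, fixed points once by each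
term. -/
theorem two_mul_ncard_range_eq_card_add_card_fixed {α β : Type*} [Finite α] {f : α → β} {ι : α → α}
    (hf : ∀ a b, f a = f b ↔ b = a ∨ b = ι a) :
    2 * (Set.range f).ncard = Nat.card α + Nat.card {a // ι a = a} := by
  classical
  have := Fintype.ofFinite α
  have hfiber (a : α) : ({b | f b = f a} : Finset α) = {a, ι a} := by
    ext b; simp [eq_comm, hf a b]
  have hfixed (a : α) (h : ι (ι a) = ι a) : ι a = a := by
    rcases (hf (ι a) a).mp ((hf a (ι a)).mpr (.inr rfl)).symm with h' | h'
    · exact h'.symm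
    · exact (h'.trans h).symm
  have hfiber_card (a : α) : #{b | f b = f a} + #{b | ι b = b ∧ f b = f a} = 2 := by
    rw [← filter_filter, filter_comm, hfiber]
    by_cases ha : ι a = a
    · simp [ha, filter_singleton]
    · rw [card_pair (Ne.symm ha), filter_eq_empty_iff.mpr]
      · rfl
      · simp only [Finset.mem_insert, Finset.mem_singleton, forall_eq_or_imp, forall_eq]
        exact ⟨ha, fun h => ha (hfixed a h)⟩
  have hrange : Set.range f = ↑(Finset.univ.image f) := by simp
  rw [hrange, Set.ncard_coe_finset, Nat.card_eq_fintype_card, ← card_univ,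
    card_eq_sum_card_image f univ, Nat.card_eq_fintype_card, Fintype.card_subtype,
    card_eq_sum_card_fiberwise (f := f) (t := Finset.univ.image f)
      (fun x _ => mem_image_of_mem f (mem_univ x)), ← sum_add_distrib,
    mul_comm, ← smul_eq_mul, ← sum_const]
  refine sum_congr rfl fun y hy => ?_
  obtain ⟨a, -, rfl⟩ := mem_image.mp hy
  simpa [filter_filter] using (hfiber_card a).symm

lemma Set.EqOn.perm_inv {α : Type*} {σ π : Perm α} {A : Set α} (h : EqOn ⇑σ ⇑π A)
    (hA : MapsTo ⇑π⁻¹ A A) : EqOn ⇑σ⁻¹ ⇑π⁻¹ A := fun i hi => by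
  rw [Perm.inv_eq_iff_eq, h (hA hi)]
  exact (π.apply_symm_apply i).symm

namespace Equiv.Perm

def ClosedAt (π : Perm (Fin n)) (u : ℕ) : Prop :=
  ∀ i : Fin n, i.val < u → (π i).val < u

lemma closedAt_zero (π : Perm (Fin n)) : π.ClosedAt 0 :=
  fun _ hi => absurd hi (Nat.not_lt_zero _)

lemma closedAt_of_le (π : Perm (Fin n)) {u : ℕ} (hu : n ≤ u) : π.ClosedAt u :=
  fun i _ => (π i).isLt.trans_le hu

lemma ClosedAt.inv {π : Perm (Fin n)} {u : ℕ} (h : π.ClosedAt u) : π⁻¹.ClosedAt u := by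
  intro i hi
  have hbij : BijOn π {j | j.val < u} {j | j.val < u} :=
    (Set.toFinite _).injOn_iff_bijOn_of_mapsTo h |>.mp π.injective.injOn
  obtain ⟨j, hj, rfl⟩ := hbij.surjOn hi
  simpa using hj

@[simp]
lemma closedAt_inv_iff {π : Perm (Fin n)} {u : ℕ} : π⁻¹.ClosedAt u ↔ π.ClosedAt u :=
  ⟨fun h => by simpa using h.inv, ClosedAt.inv⟩

lemma ClosedAt.le_apply {π : Perm (Fin n)} {u : ℕ} (h : π.ClosedAt u) {i : Fin n}
    (hi : u ≤ i.val) : u ≤ (π i).val := by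
  by_contra! hlt
  simpa [hi.not_gt] using h.inv (π i) hlt

def IsBlock (π : Perm (Fin n)) (u w : ℕ) : Prop :=
  u < w ∧ w ≤ n ∧ π.ClosedAt u ∧ π.ClosedAt w ∧ ∀ x, u < x → x < w → ¬ π.ClosedAt x

lemma IsBlock.mapsTo {π : Perm (Fin n)} {u w : ℕ} (h : π.IsBlock u w) :
    MapsTo π (Fin.val ⁻¹' Ico u w) (Fin.val ⁻¹' Ico u w) :=
  fun i hi => ⟨h.2.2.1.le_apply hi.1, h.2.2.2.1 i hi.2⟩

lemma IsBlock.inv {π : Perm (Fin n)} {u w : ℕ} (h : π.IsBlock u w) : π⁻¹.IsBlock u w := by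
  simpa [IsBlock] using h

lemma isBlock_congr {σ π : Perm (Fin n)} (h : ∀ x, σ.ClosedAt x ↔ π.ClosedAt x) (u w : ℕ) :
    σ.IsBlock u w ↔ π.IsBlock u w := by
  simp only [IsBlock, h]

lemma isSection_iff {π : Perm (Fin n)} {A : Set (Fin n)} :
    IsSection π A ↔ ∃ u w, u < w ∧ w ≤ n ∧ π.ClosedAt u ∧ π.ClosedAt w ∧
      A = Fin.val ⁻¹' Ico u w := by
  constructor
  · rintro ⟨u, v, huv, hv, rfl, hu, hmid, -⟩
    refine ⟨u, v + 1, by omega, hv, hu, fun i hi => ?_, ?_⟩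
    · rcases lt_or_ge i.val u with h | h
      · exact (hu i h).trans (by omega)
      · exact Nat.lt_succ_of_le (hmid i h (by omega)).2
    · ext i; simp
  · rintro ⟨u, w, huw, hw, hu, hw', rfl⟩
    refine ⟨u, w - 1, by omega, by omega, ?_, hu, fun i h1 h2 => ?_, fun i hi => ?_⟩
    · ext i
      simp only [mem_preimage, mem_Ico, mem_ofPred_eq]
      omega
    · exact ⟨hu.le_apply h1, by have := hw' i (by omega); omega⟩
    · have := hw'.le_apply (i := i) (by omega); omega

lemma isSegment_iff {π : Perm (Fin n)} {A : Set (Fin n)} :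
    IsSegment π A ↔ ∃ u w, π.IsBlock u w ∧ A = Fin.val ⁻¹' Ico u w := by
  simp only [IsSegment, isSection_iff]
  constructor
  · rintro ⟨⟨u, w, huw, hw, hu, hw', rfl⟩, hmin⟩
    refine ⟨u, w, ⟨huw, hw, hu, hw', fun x hux hxw hx => ?_⟩, rfl⟩
    have := hmin _ ⟨u, x, hux, by omega, hu, hx, rfl⟩ fun i hi => ⟨hi.1, hi.2.trans hxw⟩
    have hmem : (⟨x, by omega⟩ : Fin n) ∈ Fin.val ⁻¹' Ico u w := ⟨hux.le, hxw⟩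
    rw [← this] at hmem
    exact hmem.2.false
  · rintro ⟨u, w, ⟨huw, hw, hu, hw', hgap⟩, rfl⟩
    refine ⟨⟨u, w, huw, hw, hu, hw', rfl⟩, ?_⟩
    rintro B ⟨u', w', hlt', hle', hcu', hcw', rfl⟩ hsub
    have h1 := hsub (show (⟨u', by omega⟩ : Fin n) ∈ Fin.val ⁻¹' Ico u' w' from ⟨le_rfl, hlt'⟩)
    have h2 := hsub (show (⟨w' - 1, by omega⟩ : Fin n) ∈ Fin.val ⁻¹' Ico u' w' from
      ⟨show u' ≤ w' - 1 by omega, show w' - 1 < w' by omega⟩)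
    simp only [mem_preimage, mem_Ico] at h1 h2
    have : u' = u := by_contra fun hne => hgap u' (by omega) (by omega) hcu'
    have : w' = w := by_contra fun hne => hgap w' (by omega) (by omega) hcw'
    subst_vars
    rfl

lemma IsSegment.mapsTo {π : Perm (Fin n)} {A : Set (Fin n)} (h : IsSegment π A) :
    MapsTo π A A := by
  obtain ⟨u, w, hb, rfl⟩ := isSegment_iff.mp h
  exact hb.mapsTo

lemma IsSegment.inv {π : Perm (Fin n)} {A : Set (Fin n)} (h : IsSegment π A) :
    IsSegment π⁻¹ A := by
  obtain ⟨u, w, hb, rfl⟩ := isSegment_iff.mp h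
  exact isSegment_iff.mpr ⟨u, w, hb.inv, rfl⟩

lemma preimage_val_Ico_inj {u w u' w' : ℕ} (h : u < w) (hw : w ≤ n) (h' : u' < w')
    (hw' : w' ≤ n) (hA : (Fin.val ⁻¹' Ico u w : Set (Fin n)) = Fin.val ⁻¹' Ico u' w') :
    u = u' ∧ w = w' := by
  have key : ∀ x < n, (u ≤ x ∧ x < w ↔ u' ≤ x ∧ x < w') := fun x hx =>
    Set.ext_iff.mp hA ⟨x, hx⟩
  have := key u; have := key u'; have := key (w - 1); have := key (w' - 1)
  omega

/-- For `0 < u ≤ n`, the interval `[a, u)` up from the largest closed point `a` below `u` is a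
segment of `π`, hence of `σ`. -/
lemma closedAt_of_forall_isSegment {σ π : Perm (Fin n)}
    (hseg : ∀ A, IsSegment π A → IsSegment σ A) {u : ℕ} (hu : π.ClosedAt u) :
    σ.ClosedAt u := by
  classical
  rcases Nat.eq_zero_or_pos u with rfl | hu0
  · exact σ.closedAt_zero
  rcases le_or_gt u n with hun | hun
  swap
  · exact σ.closedAt_of_le hun.le
  set a := Nat.findGreatest π.ClosedAt (u - 1)
  have ha : π.ClosedAt a := Nat.findGreatest_spec (Nat.zero_le _) π.closedAt_zero
  have hau : a ≤ u - 1 := Nat.findGreatest_le _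
  have hblock : π.IsBlock a u := ⟨by omega, hun, ha, hu, fun x hax hxu hx =>
    (Nat.findGreatest_is_greatest hax (by omega)) hx⟩
  obtain ⟨u', w', hb', hA⟩ := isSegment_iff.mp (hseg _ (isSegment_iff.mpr ⟨a, u, hblock, rfl⟩))
  obtain ⟨-, rfl⟩ := preimage_val_Ico_inj hblock.1 hun hb'.1 hb'.2.1 hA
  exact hb'.2.2.2.1

lemma forall_isSegment_iff_iff_forall_closedAt_iff {σ π : Perm (Fin n)} :
    (∀ A, IsSegment σ A ↔ IsSegment π A) ↔ ∀ x, σ.ClosedAt x ↔ π.ClosedAt x := by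
  refine ⟨fun h x => ⟨closedAt_of_forall_isSegment fun A => (h A).mp,
    closedAt_of_forall_isSegment fun A => (h A).mpr⟩, fun h A => ?_⟩
  simp only [isSegment_iff, isBlock_congr h]

end Equiv.Perm

open Equiv.Perm

lemma irredPerm_iff {π : Perm (Fin n)} :
    IrredPerm π ↔ ∀ u, 0 < u → u < n → ¬ π.ClosedAt u := by
  simp [IrredPerm, ClosedAt]

lemma IrredPerm.inv {π : Perm (Fin n)} (h : IrredPerm π) : IrredPerm π⁻¹ := by
  simpa [irredPerm_iff] using h

lemma invNum_inv (π : Perm (Fin n)) : invNum π⁻¹ = invNum π := by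
  refine Finset.card_bij' (fun p _ => (π⁻¹ p.2, π⁻¹ p.1)) (fun p _ => (π p.2, π p.1))
    ?_ ?_ (by simp) (by simp) <;> simp +contextual

lemma SIE.refl (π : Perm (Fin n)) : SIE π π :=
  ⟨fun _ => Iff.rfl, fun _ _ => Or.inl fun _ _ => rfl⟩

lemma SIE.symm {σ π : Perm (Fin n)} (h : SIE σ π) : SIE π σ := by
  refine ⟨fun A => (h.1 A).symm, fun A hA => ?_⟩
  have hA' : IsSegment π A := (h.1 A).mp hA
  rcases h.2 A hA' with hc | hc
  · exact Or.inl (EqOn.symm hc)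
  · refine Or.inr (EqOn.symm ?_)
    simpa using EqOn.perm_inv hc (by simpa using hA'.mapsTo)

lemma SIE.trans {σ π γ : Perm (Fin n)} (h₁ : SIE σ π) (h₂ : SIE π γ) : SIE σ γ := by
  refine ⟨fun A => (h₁.1 A).trans (h₂.1 A), fun A hA => ?_⟩
  have hAπ : IsSegment π A := (h₂.1 A).mpr hA
  rcases h₁.2 A hAπ with hc₁ | hc₁ <;> rcases h₂.2 A hA with hc₂ | hc₂
  · exact Or.inl (EqOn.trans hc₁ hc₂)
  · exact Or.inr (EqOn.trans hc₁ hc₂)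
  · exact Or.inr (EqOn.trans hc₁ (EqOn.perm_inv hc₂ hA.inv.mapsTo))
  · exact Or.inl (EqOn.trans hc₁ (by simpa using EqOn.perm_inv hc₂ (by simpa using hA.mapsTo)))

lemma SIE.closedAt_iff {σ π : Perm (Fin n)} (h : SIE σ π) (x : ℕ) :
    σ.ClosedAt x ↔ π.ClosedAt x :=
  forall_isSegment_iff_iff_forall_closedAt_iff.mp h.1 x

def sieClass (π : Perm (Fin n)) : Set (Perm (Fin n)) := {σ | SIE σ π}

lemma sieClass_eq_sieClass_iff {σ π : Perm (Fin n)} : sieClass σ = sieClass π ↔ SIE σ π :=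
  ⟨fun h => (h ▸ SIE.refl σ : σ ∈ sieClass π), fun h => Set.ext fun _ =>
    ⟨fun hτ => SIE.trans hτ h, fun hτ => SIE.trans hτ h.symm⟩⟩

lemma sie_iff {σ π : Perm (Fin n)} :
    SIE σ π ↔ (∀ x, σ.ClosedAt x ↔ π.ClosedAt x) ∧ ∀ u w, π.IsBlock u w →
      EqOn σ π (Fin.val ⁻¹' Ico u w) ∨ EqOn σ ⇑π⁻¹ (Fin.val ⁻¹' Ico u w) := by
  rw [SIE, forall_isSegment_iff_iff_forall_closedAt_iff]
  refine and_congr_right fun _ => ⟨fun h u w hb => h _ (isSegment_iff.mpr ⟨u, w, hb, rfl⟩), ?_⟩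
  intro h A hA
  obtain ⟨u, w, hb, rfl⟩ := isSegment_iff.mp hA
  exact h u w hb

namespace Equiv.Perm

/-- Taking `hn : s + m = n` rather than producing `Perm (Fin (s + m))` lets `glue` build
permutations of `Fin h` from permutations of `Fin s` and `Fin (h - s)`. -/
def glue (hn : s + m = n) (ρ : Perm (Fin s)) (τ : Perm (Fin m)) : Perm (Fin n) :=
  (finSumFinEquiv.trans (finCongr hn)).permCongr (ρ.sumCongr τ)

@[simp]
lemma glue_castAdd (ρ : Perm (Fin s)) (τ : Perm (Fin m)) (i : Fin s) :
    glue rfl ρ τ (Fin.castAdd m i) = Fin.castAdd m (ρ i) := by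
  simp [glue, permCongr_apply]

@[simp]
lemma glue_natAdd (ρ : Perm (Fin s)) (τ : Perm (Fin m)) (j : Fin m) :
    glue rfl ρ τ (Fin.natAdd s j) = Fin.natAdd s (τ j) := by
  simp [glue, permCongr_apply]

lemma glue_inv (hn : s + m = n) (ρ : Perm (Fin s)) (τ : Perm (Fin m)) :
    (glue hn ρ τ)⁻¹ = glue hn ρ⁻¹ τ⁻¹ := by
  subst hn
  ext1 i
  rw [Perm.inv_eq_iff_eq]
  induction i using Fin.addCases <;> simp

section Glue

variable (hn : s + m = n) (ρ ρ' : Perm (Fin s)) (τ τ' : Perm (Fin m))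
include hn

lemma closedAt_glue_of_le {u : ℕ} (hu : u ≤ s) : (glue hn ρ τ).ClosedAt u ↔ ρ.ClosedAt u := by
  subst hn
  refine ⟨fun h i hi => by simpa using h (Fin.castAdd m i) hi, fun h i hi => ?_⟩
  induction i using Fin.addCases with
  | left i => simpa using h i hi
  | right j => simp only [Fin.val_natAdd] at hi; omega

lemma closedAt_glue_add (u : ℕ) : (glue hn ρ τ).ClosedAt (s + u) ↔ τ.ClosedAt u := by
  subst hn
  refine ⟨fun h j hj => by simpa using h (Fin.natAdd s j) (by simpa using hj), fun h i hi => ?_⟩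
  induction i using Fin.addCases with
  | left i => simp only [glue_castAdd, Fin.val_castAdd]; omega
  | right j => simpa using h j (by simpa using hi)

lemma closedAt_glue_iff (hs : 0 < s) (hρ : IrredPerm ρ) (x : ℕ) :
    (glue hn ρ τ).ClosedAt x ↔ x = 0 ∨ ∃ u, x = s + u ∧ τ.ClosedAt u := by
  rcases le_or_gt x s with hx | hx
  · rw [closedAt_glue_of_le hn ρ τ hx]
    have hρx : ρ.ClosedAt x ↔ x = 0 ∨ x = s := by
      refine ⟨fun h => by_contra fun hne => irredPerm_iff.mp hρ x (by omega) (by omega) h, ?_⟩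
      rintro (rfl | rfl)
      exacts [ρ.closedAt_zero, ρ.closedAt_of_le le_rfl]
    rw [hρx]
    refine or_congr_right ⟨fun h => ⟨0, by omega, τ.closedAt_zero⟩, ?_⟩
    rintro ⟨u, rfl, -⟩
    omega
  · obtain ⟨u, rfl⟩ := Nat.exists_eq_add_of_le hx.le
    rw [closedAt_glue_add]
    simp only [Nat.add_eq_zero_iff, Nat.add_left_cancel_iff]
    constructor
    · exact fun h => .inr ⟨_, rfl, h⟩
    · rintro (h | ⟨_, rfl, h⟩)
      · omega
      · exact h

lemma isBlock_glue_iff (hs : 0 < s) (hρ : IrredPerm ρ) (a b : ℕ) :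
    (glue hn ρ τ).IsBlock a b ↔ (a = 0 ∧ b = s) ∨ ∃ u w, τ.IsBlock u w ∧ a = s + u ∧ b = s + w := by
  simp only [IsBlock, closedAt_glue_iff hn ρ τ hs hρ]
  constructor
  · rintro ⟨hab, hb, ha | ⟨u, rfl, hu⟩, hb0 | ⟨w, rfl, hw⟩, hgap⟩
    · omega
    · left
      refine ⟨ha, ?_⟩
      by_contra hw0
      exact hgap s (by omega) (by omega) (.inr ⟨0, rfl, τ.closedAt_zero⟩)
    · omega
    · right
      refine ⟨u, w, ⟨by omega, by omega, hu, hw, fun x h1 h2 hx => ?_⟩, rfl, rfl⟩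
      exact hgap (s + x) (by omega) (by omega) (.inr ⟨x, rfl, hx⟩)
  · rintro (⟨rfl, rfl⟩ | ⟨u, w, ⟨huw, hw, hu, hw', hgap⟩, rfl, rfl⟩)
    · refine ⟨hs, by omega, .inl rfl, .inr ⟨0, rfl, τ.closedAt_zero⟩, ?_⟩
      rintro x h1 h2 (rfl | ⟨u, rfl, -⟩) <;> omega
    · refine ⟨by omega, by omega, .inr ⟨u, rfl, hu⟩, .inr ⟨w, rfl, hw'⟩, ?_⟩
      rintro x h1 h2 (rfl | ⟨y, rfl, hy⟩)
      · omega
      · exact hgap y (by omega) (by omega) hy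

lemma eqOn_glue_iff_left :
    EqOn (glue hn ρ' τ') (glue hn ρ τ) (Fin.val ⁻¹' Ico 0 s) ↔ ρ' = ρ := by
  subst hn
  refine ⟨fun h => ext fun i => by simpa using h (x := Fin.castAdd m i) (by simp), ?_⟩
  rintro rfl i hi
  induction i using Fin.addCases with
  | left i => simp
  | right j => simp at hi

lemma eqOn_glue_iff_right (u w : ℕ) :
    EqOn (glue hn ρ' τ') (glue hn ρ τ) (Fin.val ⁻¹' Ico (s + u) (s + w)) ↔
      EqOn τ' τ (Fin.val ⁻¹' Ico u w) := by
  subst hn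
  refine ⟨fun h j hj => by simpa using h (x := Fin.natAdd s j) (by simpa using hj), ?_⟩
  intro h i hi
  induction i using Fin.addCases with
  | left i => simp only [mem_preimage, Fin.val_castAdd, mem_Ico] at hi; omega
  | right j => simpa using h (x := j) (by simpa using hi)

end Glue

lemma exists_eq_glue (hn : s + m = n) {π : Perm (Fin n)} (h : π.ClosedAt s) :
    ∃ ρ τ, π = glue hn ρ τ := by
  subst hn
  have hright (j : Fin m) : s ≤ (π (Fin.natAdd s j)).val := h.le_apply (by simp)
  let ρ : Perm (Fin s) := Equiv.ofBijective (fun i => ⟨π (Fin.castAdd m i), h _ (by simp)⟩)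
    (Finite.injective_iff_bijective.mp fun i i' hi => by
      simpa using π.injective (Fin.ext (Fin.mk.inj hi)))
  let τ : Perm (Fin m) := Equiv.ofBijective
    (fun j => ⟨π (Fin.natAdd s j) - s, by have := hright j; omega⟩)
    (Finite.injective_iff_bijective.mp fun j j' hj => by
      have := hright j; have := hright j'
      have := Fin.mk.inj hj
      simpa using π.injective (a₁ := Fin.natAdd s j) (a₂ := Fin.natAdd s j') (Fin.ext (by omega)))
  refine ⟨ρ, τ, ext fun i => ?_⟩
  induction i using Fin.addCases with
  | left i => ext; simp [ρ]
  | right j =>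
    ext
    simp only [glue_natAdd, ofBijective_apply, Fin.val_natAdd, τ]
    have := hright j
    omega

end Equiv.Perm

lemma invNum_glue (hn : s + m = n) (ρ : Perm (Fin s)) (τ : Perm (Fin m)) :
    invNum (glue hn ρ τ) = invNum ρ + invNum τ := by
  subst hn
  have hcast (a b : Fin s) : Fin.castAdd m a < Fin.castAdd m b ↔ a < b := Iff.rfl
  have hnat (a b : Fin m) : Fin.natAdd s a < Fin.natAdd s b ↔ a < b := Fin.natAdd_lt_natAdd_iff s
  have hcross (a : Fin s) (b : Fin m) : ¬ Fin.natAdd s b < Fin.castAdd m a := by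
    simp only [Fin.lt_def, Fin.val_natAdd, Fin.val_castAdd]; omega
  simp only [invNum, Finset.card_filter, Fintype.sum_prod_type, Fin.sum_univ_add, glue_castAdd,
    glue_natAdd, hcast, hnat, hcross, and_false, false_and, if_false, Finset.sum_const_zero,
    add_zero, zero_add]

lemma sie_glue_iff (hn : s + m = n) {ρ ρ' : Perm (Fin s)} {τ τ' : Perm (Fin m)} (hs : 0 < s)
    (hρ : IrredPerm ρ) :
    SIE (glue hn ρ' τ') (glue hn ρ τ) ↔ (ρ' = ρ ∨ ρ' = ρ⁻¹) ∧ SIE τ' τ := by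
  simp only [sie_iff, isBlock_glue_iff hn ρ τ hs hρ, glue_inv]
  constructor
  · rintro ⟨hcl, hblock⟩
    have hτcl (u : ℕ) : τ'.ClosedAt u ↔ τ.ClosedAt u := by
      rw [← closedAt_glue_add hn ρ' τ', ← closedAt_glue_add hn ρ τ, hcl]
    refine ⟨?_, hτcl, fun u w hb => ?_⟩
    · simpa only [eqOn_glue_iff_left] using hblock 0 s (.inl ⟨rfl, rfl⟩)
    · simpa only [eqOn_glue_iff_right] using hblock _ _ (.inr ⟨u, w, hb, rfl, rfl⟩)
  · rintro ⟨hρ', hτcl, hblock⟩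
    have hρcl (x : ℕ) : ρ'.ClosedAt x ↔ ρ.ClosedAt x := by
      rcases hρ' with rfl | rfl <;> simp
    refine ⟨fun x => ?_, ?_⟩
    · rcases le_or_gt x s with hx | hx
      · rw [closedAt_glue_of_le hn _ _ hx, closedAt_glue_of_le hn _ _ hx, hρcl]
      · obtain ⟨u, rfl⟩ := Nat.exists_eq_add_of_le hx.le
        rw [closedAt_glue_add, closedAt_glue_add, hτcl]
    · rintro a b (⟨rfl, rfl⟩ | ⟨u, w, hb, rfl, rfl⟩)
      · simpa only [eqOn_glue_iff_left] using hρ'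
      · simpa only [eqOn_glue_iff_right] using hblock u w hb

lemma SIE.glue_length_eq {s' m' : ℕ} {hn : s + m = n} {hn' : s' + m' = n}
    {ρ : Perm (Fin s)} {τ : Perm (Fin m)} {ρ' : Perm (Fin s')} {τ' : Perm (Fin m')}
    (hs : 0 < s) (hρ : IrredPerm ρ) (hs' : 0 < s') (hρ' : IrredPerm ρ')
    (h : SIE (glue hn' ρ' τ') (glue hn ρ τ)) : s' = s := by
  have hcl := h.closedAt_iff
  have h₁ := (hcl s).mpr ((closedAt_glue_iff hn ρ τ hs hρ s).mpr (.inr ⟨0, rfl, τ.closedAt_zero⟩))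
  have h₂ := (hcl s').mp ((closedAt_glue_iff hn' ρ' τ' hs' hρ' s').mpr
    (.inr ⟨0, rfl, τ'.closedAt_zero⟩))
  rw [closedAt_glue_iff hn' ρ' τ' hs' hρ'] at h₁
  rw [closedAt_glue_iff hn ρ τ hs hρ] at h₂
  obtain h₁ | ⟨u, hu, -⟩ := h₁ <;> obtain h₂ | ⟨u', hu', -⟩ := h₂ <;> omega

lemma sieClass_glue_eq_iff (hn : s + m = n) {ρ ρ' : Perm (Fin s)}
    {τ τ' : Perm (Fin m)} (hs : 0 < s) (hρ : IrredPerm ρ) :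
    sieClass (glue hn ρ' τ') = sieClass (glue hn ρ τ) ↔
      (ρ' = ρ ∨ ρ' = ρ⁻¹) ∧ sieClass τ' = sieClass τ := by
  simp only [sieClass_eq_sieClass_iff, sie_glue_iff hn hs hρ]

def sieClasses (n k : ℕ) : Set (Set (Perm (Fin n))) :=
  {C | ∃ π, invNum π = k ∧ C = sieClass π}

lemma bCount_eq_ncard_sieClasses (n k : ℕ) : bCount n k = (sieClasses n k).ncard := rfl

noncomputable def sieRep {k : ℕ} (C : sieClasses m k) : Perm (Fin m) :=
  C.2.choose

lemma invNum_sieRep {k : ℕ} (C : sieClasses m k) : invNum (sieRep C) = k :=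
  C.2.choose_spec.1

lemma sieClass_sieRep {k : ℕ} (C : sieClasses m k) : sieClass (sieRep C) = C :=
  C.2.choose_spec.2.symm

section FirstSegment

variable (hn : s + m = n)

abbrev FirstSegmentData (s m t k : ℕ) : Type :=
  {ρ : Perm (Fin s) // IrredPerm ρ ∧ invNum ρ = t} × sieClasses m k

def FirstSegmentData.flip {t k : ℕ} (a : FirstSegmentData s m t k) : FirstSegmentData s m t k :=
  (⟨a.1.1⁻¹, a.1.2.1.inv, (invNum_inv _).trans a.1.2.2⟩, a.2)

def gluedClass (t k : ℕ) (a : FirstSegmentData s m t k) : Set (Perm (Fin n)) :=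
  sieClass (glue hn a.1.1 (sieRep a.2))

lemma gluedClass_eq_iff {t k : ℕ} (hs : 0 < s) (a b : FirstSegmentData s m t k) :
    gluedClass hn t k a = gluedClass hn t k b ↔ b = a ∨ b = a.flip := by
  rw [eq_comm, gluedClass, gluedClass, sieClass_glue_eq_iff hn hs a.1.2.1,
    sieClass_sieRep, sieClass_sieRep, or_and_right]
  simp only [FirstSegmentData.flip, Prod.ext_iff, Subtype.ext_iff]

lemma card_fixed_flip (t k : ℕ) :
    Nat.card {a : FirstSegmentData s m t k // a.flip = a} = irrInvoCount s t * bCount m k := by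
  have e : {a : FirstSegmentData s m t k // a.flip = a} ≃
      {ρ : Perm (Fin s) // ρ * ρ = 1 ∧ IrredPerm ρ ∧ invNum ρ = t} × sieClasses m k :=
    ((Equiv.subtypeEquivRight fun a => by
      simp [FirstSegmentData.flip, Prod.ext_iff, Subtype.ext_iff]).trans
      (Equiv.prodSubtypeFstEquivSubtypeProd (p := fun ρ => ρ.1⁻¹ = ρ.1))).trans
      (Equiv.prodCongr ((Equiv.subtypeSubtypeEquivSubtypeInter _ (fun ρ => ρ⁻¹ = ρ)).trans
        (Equiv.subtypeEquivRight fun ρ => by rw [mul_eq_one_iff_inv_eq]; tauto)) (.refl _))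
  rw [Nat.card_congr e, Nat.card_prod, bCount_eq_ncard_sieClasses, Nat.card_coe_set_eq]
  rfl

lemma two_mul_ncard_range_gluedClass (t k : ℕ) (hs : 0 < s) :
    2 * (range (gluedClass hn t k)).ncard = (irrCount s t + irrInvoCount s t) * bCount m k := by
  rw [two_mul_ncard_range_eq_card_add_card_fixed (gluedClass_eq_iff hn hs), card_fixed_flip,
    Nat.card_prod, bCount_eq_ncard_sieClasses, Nat.card_coe_set_eq, add_mul]
  rfl

lemma range_gluedClass (t k : ℕ) (hs : 0 < s) :
    range (gluedClass hn t k) = {C | ∃ ρ τ, IrredPerm ρ ∧ invNum ρ = t ∧ invNum τ = k ∧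
      C = sieClass (glue hn ρ τ)} := by
  ext C
  constructor
  · rintro ⟨⟨ρ, C'⟩, rfl⟩
    exact ⟨ρ.1, sieRep C', ρ.2.1, ρ.2.2, invNum_sieRep C', rfl⟩
  · rintro ⟨ρ, τ, hρ, hρt, hτ, rfl⟩
    let C' : sieClasses m k := ⟨sieClass τ, τ, hτ, rfl⟩
    refine ⟨(⟨ρ, hρ, hρt⟩, C'), (sieClass_glue_eq_iff hn hs hρ).mpr ⟨.inl rfl, ?_⟩⟩
    exact sieClass_sieRep C'

end FirstSegment

lemma exists_eq_glue_irredPerm (hn : 0 < n) (π : Perm (Fin n)) :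
    ∃ s, ∃ hs : s ≤ n, 0 < s ∧ ∃ ρ τ, IrredPerm ρ ∧ π = glue (Nat.add_sub_cancel' hs) ρ τ := by
  classical
  have hex : ∃ u, 0 < u ∧ π.ClosedAt u := ⟨n, hn, π.closedAt_of_le le_rfl⟩
  obtain ⟨hs0, hsc⟩ := Nat.find_spec hex
  have hsn : Nat.find hex ≤ n := Nat.find_min' hex ⟨hn, π.closedAt_of_le le_rfl⟩
  obtain ⟨ρ, τ, hπ⟩ := exists_eq_glue (Nat.add_sub_cancel' hsn) hsc
  refine ⟨_, hsn, hs0, ρ, τ, irredPerm_iff.mpr fun u hu0 hus hu => ?_, hπ⟩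
  refine Nat.find_min hex hus ⟨hu0, ?_⟩
  rw [hπ]
  exact (closedAt_glue_of_le _ _ _ hus.le).mpr hu

def firstSegmentClasses (n k s t : ℕ) : Set (Set (Perm (Fin n))) :=
  {C | ∃ (hs : s ≤ n) (ρ : Perm (Fin s)) (τ : Perm (Fin (n - s))), IrredPerm ρ ∧
    invNum ρ = t ∧ invNum τ = k - t ∧ C = sieClass (glue (Nat.add_sub_cancel' hs) ρ τ)}

lemma two_mul_ncard_firstSegmentClasses {k s t : ℕ} (hs0 : 0 < s) (hs : s ≤ n) :
    2 * (firstSegmentClasses n k s t).ncard =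
      (irrCount s t + irrInvoCount s t) * bCount (n - s) (k - t) := by
  have hrange :
      firstSegmentClasses n k s t = range (gluedClass (Nat.add_sub_cancel' hs) t (k - t)) := by
    rw [range_gluedClass _ _ _ hs0]
    ext C
    simp [firstSegmentClasses, hs]
  rw [hrange, two_mul_ncard_range_gluedClass _ _ _ hs0]

lemma sieClasses_eq_biUnion (hn : 0 < n) (k : ℕ) :
    sieClasses n k =
      ⋃ p ∈ (↑(Finset.Icc 1 n ×ˢ Finset.range (k + 1)) : Set (ℕ × ℕ)),
        firstSegmentClasses n k p.1 p.2 := by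
  ext C
  simp only [Set.mem_iUnion, Finset.coe_product, Set.mem_prod, Finset.coe_Icc, Set.mem_Icc,
    Finset.coe_range, Set.mem_Iio, exists_prop, Prod.exists]
  constructor
  · rintro ⟨π, rfl, rfl⟩
    obtain ⟨s, hs, hs0, ρ, τ, hρ, rfl⟩ := exists_eq_glue_irredPerm hn π
    rw [invNum_glue]
    exact ⟨s, invNum ρ, ⟨⟨hs0, hs⟩, by omega⟩, hs, ρ, τ, hρ, rfl, by omega, rfl⟩
  · rintro ⟨s, t, ⟨-, ht⟩, hs, ρ, τ, -, hρt, hτ, rfl⟩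
    exact ⟨_, by rw [invNum_glue]; omega, rfl⟩

lemma disjoint_firstSegmentClasses {k s t s' t' : ℕ} (hs : 0 < s) (hs' : 0 < s')
    (hne : (s, t) ≠ (s', t')) :
    Disjoint (firstSegmentClasses n k s t) (firstSegmentClasses n k s' t') := by
  refine Set.disjoint_left.mpr ?_
  rintro C ⟨_, ρ, τ, hρ, rfl, -, rfl⟩ ⟨_, ρ', τ', hρ', rfl, -, hC⟩
  obtain rfl := (sieClass_eq_sieClass_iff.mp hC).glue_length_eq hs' hρ' hs hρ
  obtain ⟨h | h, -⟩ := (sieClass_glue_eq_iff _ hs' hρ').mp hC <;>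
    simp [h, invNum_inv] at hne

/-- For every `h ≥ 1` and `k ≥ 0`, twice the number `B(h,k)` of "sectionally inverse or
equal" classes of permutations of `{1,…,h}` with `k` inversions equals
`Σ_{s=1}^{h} Σ_{t=0}^{k} (I(s,t) + IT(s,t)) · B(h−s, k−t)`. -/
theorem two_mul_bCount_eq (h k : ℕ) (hh : 1 ≤ h) :
    2 * bCount h k =
      ∑ s ∈ Finset.Icc 1 h, ∑ t ∈ Finset.range (k + 1),
        (irrCount s t + irrInvoCount s t) * bCount (h - s) (k - t) := by
  have hdisj : (↑(Finset.Icc 1 h ×ˢ Finset.range (k + 1)) : Set (ℕ × ℕ)).PairwiseDisjoint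
      fun p => firstSegmentClasses h k p.1 p.2 := fun p hp q hq hne =>
    disjoint_firstSegmentClasses (Finset.mem_Icc.mp (Finset.mem_product.mp hp).1).1
      (Finset.mem_Icc.mp (Finset.mem_product.mp hq).1).1 hne
  rw [bCount_eq_ncard_sieClasses, sieClasses_eq_biUnion hh,
    (Set.toFinite _).ncard_biUnion (fun _ _ => Set.toFinite _) hdisj, finsum_mem_coe_finset,
    Finset.mul_sum, Finset.sum_product]
  refine Finset.sum_congr rfl fun s hs => Finset.sum_congr rfl fun t _ => ?_
  exact two_mul_ncard_firstSegmentClasses (Finset.mem_Icc.mp hs).1 (Finset.mem_Icc.mp hs).2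
end

section
/- For every h ≥ 1 and k ≥ 0, I(h,k) + Σ_{s=1}^{h−1} Σ_{t=0}^{k} I(s,t) · P(h−s, k−t) = P(h,k), where P(h,k) is the number of permutations of {1,…,h} with exactly k inversions and I(s,t) is the number of irreducible permutations of {1,…,s} with exactly t inversions. -/
/-! Let `s` be the least positive `u` such that `{1,…,u}` is closed under `π`. Then `π`
is the block sum `σ ⊕ τ` of an irreducible `σ` on `{1,…,s}` and an arbitrary `τ` on the
remaining `h - s` points, and conversely every such pair gives a permutation with first block
`{1,…,s}`. Since `inv (σ ⊕ τ) = inv σ + inv τ`, counting the permutations with `k`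
inversions according to `s` gives the recursion, the block `s = h` contributing `I(h,k)`. -/

open Equiv Finset

section Counting

variable {α β : Type*} [Fintype α] [Fintype β]

theorem natCard_eq_sum_natCard_fiberwise (p : α → Prop) (f : α → ℕ) (S : Finset ℕ)
    (hf : ∀ a, p a → f a ∈ S) :
    Nat.card {a // p a} = ∑ s ∈ S, Nat.card {a // f a = s ∧ p a} := by
  classical
  simp only [Nat.card_eq_fintype_card, Fintype.card_subtype]
  rw [card_eq_sum_card_fiberwise (fun a ha => hf a (mem_filter.1 ha).2)]
  simp only [filter_filter, and_comm]

theorem natCard_add_eq_sum_mul (p : α → Prop) (f : α → ℕ) (g : β → ℕ) (k : ℕ) :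
    Nat.card {x : α × β // p x.1 ∧ f x.1 + g x.2 = k} =
      ∑ t ∈ range (k + 1), Nat.card {a // p a ∧ f a = t} * Nat.card {b // g b = k - t} := by
  rw [natCard_eq_sum_natCard_fiberwise _ (fun x => f x.1) _ fun x hx =>
    mem_range.2 (Nat.lt_succ_of_le (hx.2 ▸ Nat.le_add_right _ _))]
  refine sum_congr rfl fun t ht => ?_
  rw [← Nat.card_prod, ← Nat.card_congr subtypeProdEquivProd]
  refine Nat.card_congr (subtypeEquivRight fun x => ?_)
  have htk : t ≤ k := Nat.lt_succ_iff.1 (mem_range.1 ht)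
  constructor
  · rintro ⟨rfl, hp, hk⟩
    exact ⟨⟨hp, rfl⟩, by omega⟩
  · rintro ⟨⟨hp, rfl⟩, hk⟩
    exact ⟨rfl, hp, by omega⟩

end Counting

section BlockSum

variable {m n : ℕ}

def blockSum (σ : Perm (Fin m)) (τ : Perm (Fin n)) : Perm (Fin (m + n)) :=
  finSumFinEquiv.permCongr (σ.sumCongr τ)

@[simp]
theorem blockSum_castAdd (σ : Perm (Fin m)) (τ : Perm (Fin n)) (i : Fin m) :
    blockSum σ τ (Fin.castAdd n i) = Fin.castAdd n (σ i) := by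
  simp [blockSum, permCongr_apply]

@[simp]
theorem blockSum_natAdd (σ : Perm (Fin m)) (τ : Perm (Fin n)) (j : Fin n) :
    blockSum σ τ (Fin.natAdd m j) = Fin.natAdd m (τ j) := by
  simp [blockSum, permCongr_apply]

theorem blockSum_injective :
    Function.Injective fun στ : Perm (Fin m) × Perm (Fin n) => blockSum στ.1 στ.2 :=
  finSumFinEquiv.permCongr.injective.comp Perm.sumCongrHom_injective

theorem invNum_eq_sum {h : ℕ} (π : Perm (Fin h)) :
    invNum π = ∑ i, ∑ j, if i < j ∧ π j < π i then 1 else 0 := by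
  rw [invNum, card_filter, ← univ_product_univ, sum_product]

-- A pair with one point in each block is never an inversion.
theorem invNum_blockSum (σ : Perm (Fin m)) (τ : Perm (Fin n)) :
    invNum (blockSum σ τ) = invNum σ + invNum τ := by
  have hlt (i : Fin m) (j : Fin n) : Fin.castAdd n i < Fin.natAdd m j := by
    simp only [Fin.lt_def, Fin.val_castAdd, Fin.val_natAdd]; omega
  simp only [invNum_eq_sum, Fin.sum_univ_add, blockSum_castAdd, blockSum_natAdd, hlt,
    (hlt _ _).not_gt, (Fin.strictMono_castAdd n).lt_iff_lt, Fin.natAdd_lt_natAdd_iff]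
  simp

end BlockSum

section Blocks

def ClosedBelow {h : ℕ} (π : Perm (Fin h)) (u : ℕ) : Prop :=
  ∀ i : Fin h, i.val < u → (π i).val < u

theorem closedBelow_of_le {h u : ℕ} (π : Perm (Fin h)) (hu : h ≤ u) : ClosedBelow π u :=
  fun i _ => (π i).isLt.trans_le hu

theorem irredPerm_iff_forall_not_closedBelow {h : ℕ} (π : Perm (Fin h)) :
    IrredPerm π ↔ ∀ u < h, ¬ (0 < u ∧ ClosedBelow π u) := by
  simp only [IrredPerm, ClosedBelow, not_exists, not_and]
  exact forall_congr' fun _ => imp.swap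

variable {m n : ℕ}

theorem closedBelow_blockSum_iff (σ : Perm (Fin m)) (τ : Perm (Fin n)) {u : ℕ} (hu : u ≤ m) :
    ClosedBelow (blockSum σ τ) u ↔ ClosedBelow σ u := by
  constructor
  · intro hπ i hi
    simpa using hπ (Fin.castAdd n i) hi
  · intro hσ i hi
    obtain ⟨i, rfl⟩ : ∃ i' : Fin m, Fin.castAdd n i' = i := ⟨⟨i, by omega⟩, rfl⟩
    simpa using hσ i hi

theorem exists_blockSum_eq {π : Perm (Fin (m + n))} (hπ : ClosedBelow π m) :
    ∃ σ τ, blockSum σ τ = π := by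
  have hmaps : Set.MapsTo (finSumFinEquiv.symm.permCongr π) (Set.range Sum.inl)
      (Set.range Sum.inl) := by
    rintro _ ⟨i, rfl⟩
    refine ⟨⟨π (Fin.castAdd n i), hπ _ i.isLt⟩, ?_⟩
    rw [permCongr_apply, symm_symm, finSumFinEquiv_apply_left,
      ← finSumFinEquiv_symm_apply_castAdd]
    rfl
  obtain ⟨⟨σ, τ⟩, hστ⟩ := Perm.mem_sumCongrHom_range_of_perm_mapsTo_inl hmaps
  refine ⟨σ, τ, ?_⟩
  rw [Perm.sumCongrHom_apply] at hστ
  rw [blockSum, hστ, ← permCongr_symm]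
  exact finSumFinEquiv.permCongr.apply_symm_apply π

end Blocks

section FirstBlock

variable {h : ℕ}

theorem exists_pos_closedBelow (π : Perm (Fin h)) : ∃ u, 0 < u ∧ ClosedBelow π u :=
  ⟨h + 1, h.succ_pos, closedBelow_of_le π h.le_succ⟩

open Classical in
noncomputable def firstBlockLen (π : Perm (Fin h)) : ℕ :=
  Nat.find (exists_pos_closedBelow π)

theorem firstBlockLen_eq_iff (π : Perm (Fin h)) {s : ℕ} :
    firstBlockLen π = s ↔
      (0 < s ∧ ClosedBelow π s) ∧ ∀ u < s, ¬ (0 < u ∧ ClosedBelow π u) := by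
  classical
  exact Nat.find_eq_iff _

theorem firstBlockLen_mem_Icc (π : Perm (Fin h)) (hh : 0 < h) : firstBlockLen π ∈ Icc 1 h := by
  classical
  exact mem_Icc.2 ⟨(Nat.find_spec (exists_pos_closedBelow π)).1,
    Nat.find_min' _ ⟨hh, closedBelow_of_le π le_rfl⟩⟩

theorem firstBlockLen_eq_self_iff (π : Perm (Fin h)) (hh : 0 < h) :
    firstBlockLen π = h ↔ IrredPerm π := by
  rw [firstBlockLen_eq_iff, irredPerm_iff_forall_not_closedBelow]
  simp [hh, closedBelow_of_le]

variable {m n : ℕ}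

theorem firstBlockLen_blockSum_eq_iff (σ : Perm (Fin m)) (τ : Perm (Fin n)) (hm : 0 < m) :
    firstBlockLen (blockSum σ τ) = m ↔ IrredPerm σ := by
  rw [firstBlockLen_eq_iff, irredPerm_iff_forall_not_closedBelow,
    closedBelow_blockSum_iff σ τ le_rfl]
  simp only [hm, closedBelow_of_le σ le_rfl, and_self, true_and]
  exact forall₂_congr fun u hu => by rw [closedBelow_blockSum_iff σ τ hu.le]

end FirstBlock

theorem natCard_firstBlockLen_eq {m n : ℕ} (hm : 0 < m) (k : ℕ) :
    Nat.card {π : Perm (Fin (m + n)) // firstBlockLen π = m ∧ invNum π = k} =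
      Nat.card {στ : Perm (Fin m) × Perm (Fin n) //
        IrredPerm στ.1 ∧ invNum στ.1 + invNum στ.2 = k} := by
  refine (Nat.card_eq_of_bijective (fun στ => ⟨blockSum στ.1.1 στ.1.2, by
      rw [firstBlockLen_blockSum_eq_iff _ _ hm, invNum_blockSum]; exact στ.2⟩)
    ⟨?_, ?_⟩).symm
  · exact fun _ _ hστ => Subtype.ext (blockSum_injective (congrArg Subtype.val hστ))
  · rintro ⟨π, hπm, hπk⟩
    obtain ⟨σ, τ, rfl⟩ := exists_blockSum_eq ((firstBlockLen_eq_iff π).1 hπm).1.2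
    refine ⟨⟨(σ, τ), ?_⟩, rfl⟩
    rw [← firstBlockLen_blockSum_eq_iff σ τ hm, ← invNum_blockSum]
    exact ⟨hπm, hπk⟩

theorem natCard_firstBlockLen_eq_sum {h s : ℕ} (hs : 0 < s) (hsh : s ≤ h) (k : ℕ) :
    Nat.card {π : Perm (Fin h) // firstBlockLen π = s ∧ invNum π = k} =
      ∑ t ∈ range (k + 1), irrCount s t * permCount (h - s) (k - t) := by
  obtain ⟨n, rfl⟩ := Nat.exists_eq_add_of_le hsh
  rw [Nat.add_sub_cancel_left, natCard_firstBlockLen_eq hs, natCard_add_eq_sum_mul]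
  rfl

/-- For every `h ≥ 1` and `k ≥ 0`,
`I(h,k) + Σ_{s=1}^{h−1} Σ_{t=0}^{k} I(s,t) · P(h−s, k−t) = P(h,k)`. -/
theorem irrCount_recursion (h k : ℕ) (hh : 1 ≤ h) :
    irrCount h k +
      ∑ s ∈ Finset.Icc 1 (h - 1), ∑ t ∈ Finset.range (k + 1),
        irrCount s t * permCount (h - s) (k - t) = permCount h k := by
  have hIcc : Icc 1 h = insert h (Icc 1 (h - 1)) := by
    ext s
    simp only [mem_Icc, mem_insert]
    omega
  have hlast : Nat.card {π : Perm (Fin h) // firstBlockLen π = h ∧ invNum π = k} =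
      irrCount h k :=
    Nat.card_congr (subtypeEquivRight fun π => by rw [firstBlockLen_eq_self_iff π hh])
  rw [permCount, natCard_eq_sum_natCard_fiberwise _ firstBlockLen _
      fun π _ => firstBlockLen_mem_Icc π hh, hIcc,
    sum_insert (by simp only [mem_Icc]; omega), hlast]
  congr 1
  refine sum_congr rfl fun s hs => ?_
  obtain ⟨hs1, hsh⟩ := mem_Icc.1 hs
  exact (natCard_firstBlockLen_eq_sum hs1 (by omega) k).symm
end

section
/- For every h ≥ 2 and k ≥ 0, T(h,k) = T(h−1,k) + Σ_{s=2}^{h} T(h−2, k−(2s−3)), where T(h,k) is the number of involutions of {1,…,h} with exactly k inversions and a summand T(h−2, k−(2s−3)) is interpreted as 0 whenever 2s−3 > k. -/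
/-!
Sort the involutions `σ` of `{1,…,h}` by the value `σ h`. If `σ h = h`, deleting `h` leaves an
involution of `{1,…,h-1}` with the same inversions. Otherwise `σ` contains a 2-cycle `(t h)` with
`t < h`, and deleting `t` and `h` leaves an arbitrary involution of the remaining `h - 2` points,
transported to `{1,…,h-2}` by the order-preserving bijection. The only inversions lost are those
involving `t` or `h`: `(t, b)` for every `b > t` and `(a, h)` for every `a` with `σ a > t`, that is
`2 (h - t) - 1 = 2 s - 3` of them, where `s = h - t + 1` runs over `2,…,h`.
-/

open Equiv Finset

theorem Equiv.swap_mul_mul_swap_mul {α : Type*} [DecidableEq α] {σ : Perm α} {x y : α}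
    (hx : σ x = x) (hy : σ y = y) : swap x y * σ * (swap x y * σ) = σ * σ := by
  rw [mul_assoc, ← mul_assoc σ, Equiv.mul_swap_eq_swap_mul, hx, hy, mul_assoc, swap_mul_self_mul]

theorem Equiv.image_swap_mul_involutions {α : Type*} [Fintype α] [DecidableEq α] (x y : α) :
    ({ρ | ρ * ρ = 1 ∧ ρ x = x ∧ ρ y = y} : Finset (Perm α)).image (swap x y * ·) =
      ({σ | σ * σ = 1 ∧ σ y = x} : Finset (Perm α)) := by
  ext σ
  simp only [mem_image, mem_filter, mem_univ, true_and]
  constructor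
  · rintro ⟨ρ, ⟨hρ, hx, hy⟩, rfl⟩
    refine ⟨by rw [swap_mul_mul_swap_mul hx hy, hρ], ?_⟩
    rw [Perm.mul_apply, hy, swap_apply_right]
  · rintro ⟨hσ, hy⟩
    have hx : σ x = y := by rw [← hy, ← Perm.mul_apply, hσ, Perm.one_apply]
    have hρx : (swap x y * σ) x = x := by rw [Perm.mul_apply, hx, swap_apply_right]
    have hρy : (swap x y * σ) y = y := by rw [Perm.mul_apply, hy, swap_apply_left]
    refine ⟨swap x y * σ, ⟨?_, hρx, hρy⟩, swap_mul_self_mul x y σ⟩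
    rw [← swap_mul_mul_swap_mul hρx hρy, swap_mul_self_mul, hσ]

section ViaFintypeEmbedding

variable {α β : Type*} [Fintype α] [DecidableEq β] (f : α ↪ β)

theorem Equiv.Perm.viaFintypeEmbedding_mul_self_eq_one_iff (e : Perm α) :
    e.viaFintypeEmbedding f * e.viaFintypeEmbedding f = 1 ↔ e * e = 1 := by
  rw [Perm.viaFintypeEmbedding, Perm.extendDomain_mul, Perm.extendDomain_eq_one_iff]

theorem Equiv.Perm.viaFintypeEmbedding_injective :
    Function.Injective fun e : Perm α => e.viaFintypeEmbedding f :=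
  Perm.extendDomainHom_injective f.toEquivRange

theorem Equiv.Perm.exists_viaFintypeEmbedding_eq {σ : Perm β}
    (hσ : ∀ b ∉ Set.range f, σ b = b) : ∃ e : Perm α, e.viaFintypeEmbedding f = σ := by
  have hrange : ∀ b, σ b ∈ Set.range f ↔ b ∈ Set.range f := fun b => by
    refine ⟨fun hb => ?_, fun hb => ?_⟩
    · by_contra h
      exact h (hσ b h ▸ hb)
    · by_contra h
      exact h (by rwa [σ.injective (hσ _ h)])
  refine ⟨f.toEquivRange.symm.permCongr (σ.subtypePerm hrange), Equiv.ext fun b => ?_⟩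
  by_cases hb : b ∈ Set.range f
  · obtain ⟨a, rfl⟩ := hb
    simp only [Perm.viaFintypeEmbedding_apply_image, Equiv.permCongr_apply, Equiv.symm_symm]
    exact congrArg Subtype.val (f.toEquivRange.apply_symm_apply _)
  · rw [Perm.viaFintypeEmbedding_apply_notMem_range _ _ hb, hσ b hb]

theorem Equiv.Perm.image_viaFintypeEmbedding_involutions [DecidableEq α] [Fintype β] :
    ({e | e * e = 1} : Finset (Perm α)).image (·.viaFintypeEmbedding f) =
      ({σ | σ * σ = 1 ∧ ∀ b ∉ Set.range f, σ b = b} : Finset (Perm β)) := by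
  ext σ
  simp only [mem_image, mem_filter, mem_univ, true_and]
  constructor
  · rintro ⟨e, he, rfl⟩
    exact ⟨(viaFintypeEmbedding_mul_self_eq_one_iff f e).2 he,
      fun b hb => viaFintypeEmbedding_apply_notMem_range _ _ hb⟩
  · rintro ⟨hσ, hfix⟩
    obtain ⟨e, rfl⟩ := exists_viaFintypeEmbedding_eq f hfix
    exact ⟨e, (viaFintypeEmbedding_mul_self_eq_one_iff f e).1 hσ, rfl⟩

end ViaFintypeEmbedding

theorem invNum_eq_add_card_of_apply_orderEmbedding {m N : ℕ} (f : Fin m ↪o Fin N)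
    {σ : Perm (Fin N)} {τ : Perm (Fin m)} (hστ : ∀ i, σ (f i) = f (τ i)) :
    invNum σ = invNum τ + #{p : Fin N × Fin N |
      (p.1 ∉ Set.range f ∨ p.2 ∉ Set.range f) ∧ p.1 < p.2 ∧ σ p.2 < σ p.1} := by
  unfold invNum
  rw [← card_filter_add_card_filter_not
    (p := fun p : Fin N × Fin N => p.1 ∈ Set.range f ∧ p.2 ∈ Set.range f), filter_filter,
    filter_filter]
  congr 1
  · symm
    refine card_nbij (fun p => (f p.1, f p.2)) (fun p hp => ?_) (fun p _ q _ hpq => ?_) ?_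
    · simp_all
    · simp_all [Prod.ext_iff]
    · rintro ⟨_, _⟩ hp
      simp only [coe_filter, mem_univ, true_and, Set.mem_ofPred_eq] at hp
      obtain ⟨⟨hlt, hinv⟩, ⟨a, rfl⟩, ⟨b, rfl⟩⟩ := hp
      exact ⟨(a, b), by simp_all, rfl⟩
  · congr 1
    ext p
    simp only [mem_filter, mem_univ, true_and]
    tauto

theorem invoCount_eq_card (m k : ℕ) :
    invoCount m k = #{τ : Perm (Fin m) | τ * τ = 1 ∧ invNum τ = k} := by
  rw [invoCount, Nat.card_eq_fintype_card, Fintype.card_subtype]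

theorem card_filter_invNum_eq_of_image_eq {m N : ℕ} {s : Finset (Perm (Fin N))}
    {φ : Perm (Fin m) → Perm (Fin N)} (hφ : Function.Injective φ)
    (himage : ({τ | τ * τ = 1} : Finset _).image φ = s) {d : ℕ}
    (hd : ∀ τ, invNum (φ τ) = invNum τ + d) (k : ℕ) :
    #{σ ∈ s | invNum σ = k} = if d ≤ k then invoCount m (k - d) else 0 := by
  rw [← himage, filter_image, card_image_of_injective _ hφ, filter_filter]
  simp only [hd]
  split_ifs with hdk
  · rw [invoCount_eq_card]
    congr 1
    ext τ
    simp only [mem_filter, mem_univ, true_and]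
    exact and_congr_right fun _ => by omega
  · rw [card_eq_zero, filter_eq_empty_iff]
    intro τ _
    omega

section FixedLast

variable {m : ℕ}

theorem notMem_range_castSuccOrderEmb {x : Fin (m + 1)} :
    x ∉ Set.range Fin.castSuccOrderEmb ↔ x = Fin.last m := by
  simp [Fin.exists_castSucc_eq]

theorem invNum_viaFintypeEmbedding_castSucc (τ : Perm (Fin m)) :
    invNum (τ.viaFintypeEmbedding Fin.castSuccOrderEmb.toEmbedding) = invNum τ := by
  rw [invNum_eq_add_card_of_apply_orderEmbedding Fin.castSuccOrderEmb
    (Perm.viaFintypeEmbedding_apply_image _ _), add_eq_left, card_eq_zero, filter_eq_empty_iff]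
  intro p _ ⟨hp, hlt, hinv⟩
  rcases hp with h | h
  · rw [notMem_range_castSuccOrderEmb.1 h] at hlt
    exact (Fin.le_last _).not_gt hlt
  · rw [Perm.viaFintypeEmbedding_apply_notMem_range _ _ h,
      notMem_range_castSuccOrderEmb.1 h] at hinv
    exact (Fin.le_last _).not_gt hinv

theorem image_viaFintypeEmbedding_castSucc_involutions :
    ({τ | τ * τ = 1} : Finset (Perm (Fin m))).image
        (·.viaFintypeEmbedding Fin.castSuccOrderEmb.toEmbedding) =
      ({σ | σ * σ = 1 ∧ σ (Fin.last m) = Fin.last m} : Finset (Perm (Fin (m + 1)))) := by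
  rw [Perm.image_viaFintypeEmbedding_involutions]
  congr! 3 with σ
  simp only [RelEmbedding.coe_toEmbedding, notMem_range_castSuccOrderEmb, forall_eq]

end FixedLast

section TwoCycle

variable {n : ℕ}

theorem card_inversions_meeting_of_swap_last (j : Fin (n + 1)) {σ : Perm (Fin (n + 2))}
    (hL : σ (Fin.last (n + 1)) = j.castSucc) (hc : σ j.castSucc = Fin.last (n + 1)) :
    #{p : Fin (n + 2) × Fin (n + 2) |
      ((p.1 = j.castSucc ∨ p.1 = Fin.last (n + 1)) ∨
        (p.2 = j.castSucc ∨ p.2 = Fin.last (n + 1))) ∧ p.1 < p.2 ∧ σ p.2 < σ p.1} =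
      2 * (n - j) + 1 := by
  set c := j.castSucc
  set L := Fin.last (n + 1)
  have hS : ({p | ((p.1 = c ∨ p.1 = L) ∨ (p.2 = c ∨ p.2 = L)) ∧
      p.1 < p.2 ∧ σ p.2 < σ p.1} : Finset (Fin (n + 2) × Fin (n + 2))) =
      {c} ×ˢ Ioi c ∪ ({a | c < σ a} : Finset (Fin (n + 2))) ×ˢ {L} := by
    ext ⟨a, b⟩
    simp only [mem_filter, mem_univ, true_and, mem_union, mem_product, mem_singleton, mem_Ioi]
    constructor
    · rintro ⟨(rfl | rfl) | (rfl | rfl), hab, hinv⟩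
      · exact Or.inl ⟨rfl, hab⟩
      · exact absurd hab (Fin.le_last b).not_gt
      · rw [hc] at hinv
        exact absurd hinv (Fin.le_last _).not_gt
      · rw [hL] at hinv
        exact Or.inr ⟨hinv, rfl⟩
    · rintro (⟨rfl, hcb⟩ | ⟨hca, rfl⟩)
      · refine ⟨Or.inl (Or.inl rfl), hcb, ?_⟩
        rw [hc]
        exact Fin.lt_last_iff_ne_last.2 fun h => hcb.ne' (σ.injective (h.trans hc.symm))
      · refine ⟨Or.inr (Or.inr rfl), Fin.lt_last_iff_ne_last.2 ?_, by rwa [hL]⟩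
        rintro rfl
        rw [hL] at hca
        exact lt_irrefl _ hca
  have hinter :
      {c} ×ˢ Ioi c ∩ ({a | c < σ a} : Finset (Fin (n + 2))) ×ˢ {L} = {(c, L)} := by
    ext ⟨a, b⟩
    simp only [mem_inter, mem_product, mem_singleton, mem_Ioi, mem_filter, mem_univ, true_and,
      Prod.mk.injEq]
    constructor
    · rintro ⟨⟨rfl, -⟩, -, rfl⟩
      exact ⟨rfl, rfl⟩
    · rintro ⟨rfl, rfl⟩
      exact ⟨⟨rfl, Fin.castSucc_lt_last j⟩, by rw [hc]; exact Fin.castSucc_lt_last j, rfl⟩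
  have hσ : #({a | c < σ a} : Finset (Fin (n + 2))) = #(Ioi c) := card_equiv σ (by simp)
  have := card_union_add_card_inter ({c} ×ˢ Ioi c)
    (({a | c < σ a} : Finset (Fin (n + 2))) ×ˢ {L})
  simp only [hinter, card_product, hσ, card_singleton, Fin.card_Ioi] at this
  rw [hS]
  have hcj : (c : ℕ) = j := Fin.val_castSucc j
  have := j.isLt
  omega

def castSuccSuccAboveOrderEmb (j : Fin (n + 1)) : Fin n ↪o Fin (n + 2) :=
  (Fin.succAboveOrderEmb j).trans Fin.castSuccOrderEmb

theorem notMem_range_castSuccSuccAboveOrderEmb {j : Fin (n + 1)} {x : Fin (n + 2)} :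
    x ∉ Set.range (castSuccSuccAboveOrderEmb j) ↔ x = j.castSucc ∨ x = Fin.last (n + 1) := by
  rw [← not_iff_not, not_not, not_or]
  constructor
  · rintro ⟨i, rfl⟩
    exact ⟨fun h => j.succAbove_ne i (Fin.castSucc_injective _ h),
      Fin.castSucc_ne_last _⟩
  · rintro ⟨hc, hL⟩
    obtain ⟨y, rfl⟩ := Fin.exists_castSucc_eq.2 hL
    obtain ⟨i, rfl⟩ := Fin.exists_succAbove_eq_iff.2 fun h => hc (congrArg _ h)
    exact ⟨i, rfl⟩

def twoCycleExt (j : Fin (n + 1)) (τ : Perm (Fin n)) : Perm (Fin (n + 2)) :=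
  swap j.castSucc (Fin.last (n + 1)) *
    τ.viaFintypeEmbedding (castSuccSuccAboveOrderEmb j).toEmbedding

theorem twoCycleExt_injective (j : Fin (n + 1)) : Function.Injective (twoCycleExt j) :=
  (mul_right_injective _).comp (Perm.viaFintypeEmbedding_injective _)

theorem image_twoCycleExt_involutions (j : Fin (n + 1)) :
    ({τ | τ * τ = 1} : Finset (Perm (Fin n))).image (twoCycleExt j) =
      ({σ | σ * σ = 1 ∧ σ (Fin.last (n + 1)) = j.castSucc} :
        Finset (Perm (Fin (n + 2)))) := by
  have hfix : ({ρ | ρ * ρ = 1 ∧ ρ j.castSucc = j.castSucc ∧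
      ρ (Fin.last (n + 1)) = Fin.last (n + 1)} : Finset (Perm (Fin (n + 2)))) =
      ({τ | τ * τ = 1} : Finset (Perm (Fin n))).image
        (·.viaFintypeEmbedding (castSuccSuccAboveOrderEmb j).toEmbedding) := by
    rw [Perm.image_viaFintypeEmbedding_involutions]
    congr! 3 with ρ
    simp only [RelEmbedding.coe_toEmbedding, notMem_range_castSuccSuccAboveOrderEmb,
      forall_eq_or_imp, forall_eq]
  rw [← image_swap_mul_involutions, hfix, image_image]
  rfl

theorem invNum_twoCycleExt (j : Fin (n + 1)) (τ : Perm (Fin n)) :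
    invNum (twoCycleExt j τ) = invNum τ + (2 * (n - j) + 1) := by
  set f := castSuccSuccAboveOrderEmb j
  have hout : ∀ x, x = j.castSucc ∨ x = Fin.last (n + 1) →
      τ.viaFintypeEmbedding f.toEmbedding x = x := fun x hx =>
    Perm.viaFintypeEmbedding_apply_notMem_range _ _ (notMem_range_castSuccSuccAboveOrderEmb.2 hx)
  have hemb : ∀ i, twoCycleExt j τ (f i) = f (τ i) := fun i => by
    have hi : ¬(f (τ i) = j.castSucc ∨ f (τ i) = Fin.last (n + 1)) := fun h =>
      notMem_range_castSuccSuccAboveOrderEmb.2 h (Set.mem_range_self _)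
    rw [not_or] at hi
    rw [twoCycleExt, Perm.mul_apply]
    exact (congrArg _ (Perm.viaFintypeEmbedding_apply_image τ f.toEmbedding i)).trans
      (swap_apply_of_ne_of_ne hi.1 hi.2)
  have hL : twoCycleExt j τ (Fin.last (n + 1)) = j.castSucc := by
    rw [twoCycleExt, Perm.mul_apply, hout _ (Or.inr rfl), swap_apply_right]
  have hc : twoCycleExt j τ j.castSucc = Fin.last (n + 1) := by
    rw [twoCycleExt, Perm.mul_apply, hout _ (Or.inl rfl), swap_apply_left]
  rw [invNum_eq_add_card_of_apply_orderEmbedding f hemb]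
  simp only [f, notMem_range_castSuccSuccAboveOrderEmb]
  rw [card_inversions_meeting_of_swap_last j hL hc]

end TwoCycle

theorem sum_fin_rev_eq_sum_Icc {M : Type*} [AddCommMonoid M] (n : ℕ) (g : ℕ → M) :
    ∑ j : Fin (n + 1), g (n + 2 - j) = ∑ s ∈ Icc 2 (n + 2), g s := by
  rw [Fin.sum_univ_eq_sum_range (fun j => g (n + 2 - j))]
  refine sum_nbij' (fun j => n + 2 - j) (fun s => n + 2 - s) ?_ ?_ ?_ ?_ fun _ _ => rfl <;>
    intro a ha <;> simp only [mem_range, mem_Icc] at ha ⊢ <;> omega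

/-- For every `h ≥ 2` and `k ≥ 0`,
`T(h,k) = T(h−1,k) + Σ_{s=2}^{h} T(h−2, k−(2s−3))`, where a summand is interpreted
as `0` whenever `2s−3 > k`. -/
theorem invoCount_recursion (h k : ℕ) (hh : 2 ≤ h) :
    invoCount h k =
      invoCount (h - 1) k +
        ∑ s ∈ Finset.Icc 2 h,
          (if 2 * s - 3 ≤ k then invoCount (h - 2) (k - (2 * s - 3)) else 0) := by
  obtain ⟨n, rfl⟩ := Nat.exists_eq_add_of_le' hh
  have hfiber : ∀ x,
      #{σ ∈ ({σ | σ * σ = 1 ∧ invNum σ = k} : Finset (Perm (Fin (n + 2)))) |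
        σ (Fin.last (n + 1)) = x} =
      #{σ ∈ {σ | σ * σ = 1 ∧ σ (Fin.last (n + 1)) = x} | invNum σ = k} := fun x => by
    simp only [filter_filter, and_right_comm]
  rw [invoCount_eq_card, card_eq_sum_card_fiberwise (f := fun σ => σ (Fin.last (n + 1)))
    (fun _ _ => mem_univ _), Fin.sum_univ_castSucc]
  simp only [hfiber]
  rw [card_filter_invNum_eq_of_image_eq (Perm.viaFintypeEmbedding_injective _)
    image_viaFintypeEmbedding_castSucc_involutions (d := 0) invNum_viaFintypeEmbedding_castSucc]
  simp only [card_filter_invNum_eq_of_image_eq (twoCycleExt_injective _)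
    (image_twoCycleExt_involutions _) (invNum_twoCycleExt _)]
  rw [add_comm, ← sum_fin_rev_eq_sum_Icc]
  congr 1
  refine sum_congr rfl fun j _ => ?_
  have : 2 * (n + 2 - j) - 3 = 2 * (n - j) + 1 := by omega
  rw [this, Nat.add_sub_cancel]
end

section
/- Let m, n, k ≥ 1, let 1 ≤ i_1 < i_2 < ⋯ < i_k ≤ m, and let j_1, …, j_k be pairwise distinct elements of {1,…,n}. Let β be the join of the join-congruences cg(i_1,j_1), …, cg(i_k,j_k) of the grid K_{m,n}. Then the number of equivalence classes of β satisfies, as an identity of integers: |K_{m,n}/β| = (m+1)(n+1) + inv(τ) − k(m+n+2) + Σ_{s=1}^{k} (i_s + j_s), where inv(τ) denotes the number of pairs (s,t) with 1 ≤ s < t ≤ k and j_s > j_t. -/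
/-- The grid `K_{m,n}`: the lattice `{0,…,m} × {0,…,n}` ordered componentwise
(join and meet are componentwise max and min). -/
abbrev Grid (m n : ℕ) := Fin (m + 1) × Fin (n + 1)

/-- A join-congruence of a join-semilattice: an equivalence relation compatible with
joining a fixed element. -/
def IsJoinCong {α : Type*} [SemilatticeSup α] (r : α → α → Prop) : Prop :=
  Equivalence r ∧ ∀ a b c : α, r a b → r (a ⊔ c) (b ⊔ c)

/-- The join-congruence generated by a relation `R`: the smallest join-congruence
containing `R` (the intersection of all join-congruences containing `R`). -/
def joinCongGen {α : Type*} [SemilatticeSup α] (R : α → α → Prop) : α → α → Prop :=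
  fun a b => ∀ r : α → α → Prop, IsJoinCong r → (∀ x y, R x y → r x y) → r a b

/-- The join of a family of join-congruences: the smallest join-congruence containing
all members of the family. -/
def joinCongSup {α : Type*} [SemilatticeSup α] {ι : Sort*} (f : ι → α → α → Prop) :
    α → α → Prop :=
  joinCongGen fun a b => ∃ i, f i a b

open Fin.NatCast in
/-- For `1 ≤ i ≤ m` and `1 ≤ j ≤ n`, the join-congruence `cg(i,j)` of the grid `K_{m,n}`
generated by the pairs `((i,j−1),(i,j))` and `((i−1,j),(i,j))`. -/
def cg (m n i j : ℕ) : Grid m n → Grid m n → Prop :=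
  joinCongGen fun a b =>
    b = ((i : Fin (m + 1)), (j : Fin (n + 1))) ∧
      (a = ((i : Fin (m + 1)), ((j - 1 : ℕ) : Fin (n + 1))) ∨
        a = (((i - 1 : ℕ) : Fin (m + 1)), (j : Fin (n + 1))))

/-!
The join `β` is the equivalence relation generated by the edges `(x, j_s - 1) → (x, j_s)` for
`x ≥ i_s` and `(i_s - 1, y) → (i_s, y)` for `y ≥ j_s`: these are the generating pairs of the
`cg(i_s, j_s)` joined with grid points, and joining an edge with a point yields an edge or a loop.
Every edge goes up, and if `a ≤ b` and `a → a'` then `a' ≤ b` unless `b` has an outgoing edge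
itself. Hence the unique point without outgoing edge in a class is its greatest element, and the
classes are counted by the points that cannot be raised. By inclusion–exclusion, there are
`Σ (m + 1 - i_s)` points raisable in the second coordinate, `Σ (n + 1 - j_s)` in the first, and
`inv(τ)` in both, through `(s, t) ↦ (i_t - 1, j_s - 1)`.
-/

open Finset Relation Function

section JoinCong

variable {α : Type*} [SemilatticeSup α]

theorem isJoinCong_joinCongGen (R : α → α → Prop) : IsJoinCong (joinCongGen R) :=
  ⟨⟨fun a _ hr _ => hr.1.refl a, fun h r hr hR => hr.1.symm (h r hr hR),
      fun h₁ h₂ r hr hR => hr.1.trans (h₁ r hr hR) (h₂ r hr hR)⟩,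
    fun a b c h r hr hR => hr.2 a b c (h r hr hR)⟩

theorem le_joinCongGen (R : α → α → Prop) : R ≤ joinCongGen R :=
  fun a b h _ _ hR => hR a b h

theorem joinCongGen_le {R r : α → α → Prop} (hr : IsJoinCong r) (hR : R ≤ r) :
    joinCongGen R ≤ r :=
  fun _ _ h => h r hr hR

theorem joinCongSup_joinCongGen {ι : Sort*} (R : ι → α → α → Prop) :
    joinCongSup (fun s => joinCongGen (R s)) = joinCongGen fun a b => ∃ s, R s a b := by
  refine le_antisymm (joinCongGen_le (isJoinCong_joinCongGen _) ?_)
    (joinCongGen_le (isJoinCong_joinCongGen _) ?_)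
  · rintro a b ⟨s, h⟩
    exact joinCongGen_le (isJoinCong_joinCongGen _)
      (fun x y hxy => le_joinCongGen _ x y ⟨s, hxy⟩) a b h
  · rintro a b ⟨s, h⟩
    exact le_joinCongGen _ a b ⟨s, le_joinCongGen _ a b h⟩

theorem isJoinCong_eqvGen {E : α → α → Prop}
    (hE : ∀ a b c, E a b → EqvGen E (a ⊔ c) (b ⊔ c)) : IsJoinCong (EqvGen E) := by
  refine ⟨EqvGen.is_equivalence E, fun a b c h => ?_⟩
  induction h with
  | rel a b h => exact hE a b c h
  | refl a => exact .refl _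
  | symm a b _ ih => exact .symm _ _ ih
  | trans a b d _ _ ih₁ ih₂ => exact .trans _ _ _ ih₁ ih₂

theorem joinCongGen_eq_eqvGen {R E : α → α → Prop} (hRE : R ≤ E) (hER : E ≤ joinCongGen R)
    (hE : ∀ a b c, E a b → EqvGen E (a ⊔ c) (b ⊔ c)) : joinCongGen R = EqvGen E := by
  have : IsEquiv α (joinCongGen R) := (isJoinCong_joinCongGen R).1.isEquiv
  exact le_antisymm (joinCongGen_le (isJoinCong_eqvGen hE) (hRE.trans fun a b => .rel a b))
    (EqvGen.eqvGen_le hER)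

end JoinCong

section MaximalRepresentatives

variable {α : Type*} [PartialOrder α] {E : α → α → Prop}

theorem exists_reflTransGen_forall_not [WellFoundedGT α] (hE : ∀ a b, E a b → a < b) (a : α) :
    ∃ b, ReflTransGen E a b ∧ ∀ c, ¬ E b c := by
  induction a using WellFoundedGT.induction with
  | _ a ih =>
    by_cases h : ∃ c, E a c
    · obtain ⟨c, hc⟩ := h
      obtain ⟨b, hcb, hb⟩ := ih c (hE a c hc)
      exact ⟨b, .head hc hcb, hb⟩
    · exact ⟨a, .refl, not_exists.1 h⟩

theorem le_of_eqvGen_of_forall_not (hE : ∀ a b, E a b → a ≤ b)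
    (hE' : ∀ a a' b, E a a' → a ≤ b → a' ≤ b ∨ ∃ c, E b c) {a b : α}
    (hb : ∀ c, ¬ E b c) (h : EqvGen E b a) : a ≤ b := by
  rw [← EqvGen.reflTransGen_symmGen] at h
  induction h with
  | refl => exact le_rfl
  | tail _ hstep ih =>
    rcases hstep with h | h
    · exact (hE' _ _ b h ih).resolve_right fun ⟨c, hc⟩ => hb c hc
    · exact (hE _ _ h).trans ih

theorem ncard_eqvGen_classes [Finite α] (hE : ∀ a b, E a b → a < b)
    (hE' : ∀ a a' b, E a a' → a ≤ b → a' ≤ b ∨ ∃ c, E b c) :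
    {C : Set α | ∃ a, C = {b | EqvGen E a b}}.ncard = {b | ∀ c, ¬ E b c}.ncard := by
  have hEle a b (h : E a b) : a ≤ b := (hE a b h).le
  have hequiv := EqvGen.is_equivalence E
  have hbij : Set.BijOn (fun b => {x | EqvGen E b x}) {b | ∀ c, ¬ E b c}
      {C | ∃ a, C = {b | EqvGen E a b}} := by
    refine ⟨fun b _ => ⟨b, rfl⟩, fun b hb b' hb' hbb' => ?_, ?_⟩
    · have h : EqvGen E b b' := (Set.ext_iff.1 hbb' b').2 (hequiv.refl b')
      exact le_antisymm (le_of_eqvGen_of_forall_not hEle hE' hb' (hequiv.symm h))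
        (le_of_eqvGen_of_forall_not hEle hE' hb h)
    · rintro C ⟨a, rfl⟩
      obtain ⟨b, hab, hb⟩ := exists_reflTransGen_forall_not hE a
      have hab : EqvGen E a b := EqvGen.reflTransGen_le_eqvGen _ _ _ hab
      exact ⟨b, hb, Set.ext fun x => ⟨hequiv.trans hab, hequiv.trans (hequiv.symm hab)⟩⟩
  exact hbij.ncard_eq.symm

end MaximalRepresentatives

namespace Grid

variable {m n k : ℕ} (i j : Fin k → ℕ)

def SndRaisable (b : Grid m n) : Prop := ∃ s, i s ≤ b.1 ∧ (b.2 : ℕ) + 1 = j s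

def FstRaisable (b : Grid m n) : Prop := ∃ s, j s ≤ b.2 ∧ (b.1 : ℕ) + 1 = i s

def Edge (a b : Grid m n) : Prop :=
  (SndRaisable i j a ∧ (b.1 : ℕ) = a.1 ∧ (b.2 : ℕ) = a.2 + 1) ∨
    (FstRaisable i j a ∧ (b.1 : ℕ) = a.1 + 1 ∧ (b.2 : ℕ) = a.2)

variable {i j}

instance : DecidablePred (SndRaisable (m := m) (n := n) i j) :=
  fun _ => inferInstanceAs (Decidable (∃ _, _))

instance : DecidablePred (FstRaisable (m := m) (n := n) i j) :=
  fun _ => inferInstanceAs (Decidable (∃ _, _))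

theorem Edge.lt {a b : Grid m n} (h : Edge i j a b) : a < b := by
  simp only [Prod.lt_iff, Fin.lt_def, Fin.le_def]
  rcases h with ⟨-, h⟩ | ⟨-, h⟩ <;> omega

theorem Edge.sup_eq_or_edge {a b : Grid m n} (h : Edge i j a b) (c : Grid m n) :
    a ⊔ c = b ⊔ c ∨ Edge i j (a ⊔ c) (b ⊔ c) := by
  simp only [Edge, SndRaisable, FstRaisable, Prod.ext_iff, Fin.ext_iff, Prod.fst_sup,
    Prod.snd_sup, Fin.coe_max] at h ⊢
  rcases h with ⟨⟨s, hs⟩, h⟩ | ⟨⟨s, hs⟩, h⟩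
  · by_cases hc : (c.2 : ℕ) ≤ a.2
    · exact .inr (.inl ⟨⟨s, by omega⟩, by omega⟩)
    · exact .inl (by omega)
  · by_cases hc : (c.1 : ℕ) ≤ a.1
    · exact .inr (.inr ⟨⟨s, by omega⟩, by omega⟩)
    · exact .inl (by omega)

theorem Edge.le_or_exists_edge {a a' b : Grid m n} (h : Edge i j a a') (hab : a ≤ b) :
    a' ≤ b ∨ ∃ c, Edge i j b c := by
  simp only [Edge, SndRaisable, FstRaisable, Prod.le_def, Fin.le_def] at h hab ⊢
  rcases h with ⟨⟨s, hs⟩, h⟩ | ⟨⟨s, hs⟩, h⟩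
  · by_cases hb : (a'.2 : ℕ) ≤ b.2
    · exact .inl (by omega)
    · exact .inr ⟨(b.1, a'.2), .inl ⟨⟨s, by omega⟩, by dsimp only; omega⟩⟩
  · by_cases hb : (a'.1 : ℕ) ≤ b.1
    · exact .inl (by omega)
    · exact .inr ⟨(a'.1, b.2), .inr ⟨⟨s, by omega⟩, by dsimp only; omega⟩⟩

theorem exists_edge_iff (him : ∀ s, i s ≤ m) (hjn : ∀ s, j s ≤ n) (b : Grid m n) :
    (∃ c, Edge i j b c) ↔ SndRaisable i j b ∨ FstRaisable i j b := by
  refine ⟨fun ⟨c, hc⟩ => hc.imp And.left And.left, ?_⟩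
  rintro (⟨s, hs⟩ | ⟨s, hs⟩)
  · exact ⟨(b.1, ⟨j s, by grind⟩), .inl ⟨⟨s, hs⟩, by dsimp only; omega⟩⟩
  · exact ⟨(⟨i s, by grind⟩, b.2), .inr ⟨⟨s, hs⟩, by dsimp only; omega⟩⟩

open Fin.NatCast in
theorem val_natCast_of_le {N c : ℕ} (h : c ≤ N) : ((c : Fin (N + 1)) : ℕ) = c :=
  Fin.val_cast_of_lt (Nat.lt_succ_of_le h)

theorem edge_le_joinCongSup_cg (him : ∀ s, i s ≤ m) (hjn : ∀ s, j s ≤ n) :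
    Edge i j ≤ joinCongSup fun s => cg m n (i s) (j s) := by
  have hβ : IsJoinCong (joinCongSup fun s => cg m n (i s) (j s)) := isJoinCong_joinCongGen _
  -- each edge is a generating pair of `cg(i_s, j_s)` joined with a point on an axis
  rintro a b (⟨⟨s, hs⟩, h⟩ | ⟨⟨s, hs⟩, h⟩)
  · have := hβ.2 _ _ (a.1, 0)
      (le_joinCongGen _ _ _ ⟨s, le_joinCongGen _ _ _ ⟨rfl, .inl rfl⟩⟩)
    convert this using 1 <;>
      simp only [Prod.ext_iff, Fin.ext_iff, Prod.fst_sup, Prod.snd_sup, Fin.coe_max, Fin.val_zero,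
        val_natCast_of_le (him s), val_natCast_of_le (hjn s),
        val_natCast_of_le ((Nat.sub_le _ _).trans (hjn s))] <;> omega
  · have := hβ.2 _ _ (0, a.2)
      (le_joinCongGen _ _ _ ⟨s, le_joinCongGen _ _ _ ⟨rfl, .inr rfl⟩⟩)
    convert this using 1 <;>
      simp only [Prod.ext_iff, Fin.ext_iff, Prod.fst_sup, Prod.snd_sup, Fin.coe_max, Fin.val_zero,
        val_natCast_of_le (him s), val_natCast_of_le (hjn s),
        val_natCast_of_le ((Nat.sub_le _ _).trans (him s))] <;> omega

theorem joinCongSup_cg_eq_eqvGen (hi1 : ∀ s, 1 ≤ i s) (him : ∀ s, i s ≤ m)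
    (hj1 : ∀ s, 1 ≤ j s) (hjn : ∀ s, j s ≤ n) :
    joinCongSup (fun s => cg m n (i s) (j s)) = EqvGen (Edge i j) := by
  refine (joinCongSup_joinCongGen _).trans (joinCongGen_eq_eqvGen ?_
    ((edge_le_joinCongSup_cg him hjn).trans (joinCongSup_joinCongGen _).le) ?_)
  · rintro a b ⟨s, rfl, rfl | rfl⟩ <;>
      simp only [Edge, SndRaisable, FstRaisable, val_natCast_of_le (him s),
        val_natCast_of_le (hjn s), val_natCast_of_le ((Nat.sub_le _ _).trans (him s)),
        val_natCast_of_le ((Nat.sub_le _ _).trans (hjn s))]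
    · exact .inl ⟨⟨s, le_rfl, by grind⟩, trivial, by grind⟩
    · exact .inr ⟨⟨s, le_rfl, by grind⟩, by grind, trivial⟩
  · intro a b c h
    rcases h.sup_eq_or_edge c with h | h
    · rw [h]
      exact .refl _
    · exact .rel _ _ h

theorem ncard_classes_add_card_raisable (hi1 : ∀ s, 1 ≤ i s) (him : ∀ s, i s ≤ m)
    (hj1 : ∀ s, 1 ≤ j s) (hjn : ∀ s, j s ≤ n) :
    {C : Set (Grid m n) | ∃ a, C = {b | joinCongSup (fun s => cg m n (i s) (j s)) a b}}.ncard +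
      #{b : Grid m n | SndRaisable i j b ∨ FstRaisable i j b} = (m + 1) * (n + 1) := by
  have hterminal : {b : Grid m n | ∀ c, ¬ Edge i j b c} =
      ↑({b | ¬ (SndRaisable i j b ∨ FstRaisable i j b)} : Finset (Grid m n)) := by
    ext b
    simp only [coe_filter, mem_univ, true_and, Set.mem_ofPred_eq, ← not_exists,
      exists_edge_iff him hjn]
  rw [joinCongSup_cg_eq_eqvGen hi1 him hj1 hjn,
    ncard_eqvGen_classes (fun _ _ h => h.lt) (fun _ _ _ h => h.le_or_exists_edge), hterminal,
    Set.ncard_coe_finset, add_comm, card_filter_add_card_filter_not, card_univ,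
    Fintype.card_prod, Fintype.card_fin, Fintype.card_fin]

theorem card_sndRaisable_add_sum (him : ∀ s, i s ≤ m) (hjinj : Injective j)
    (hj1 : ∀ s, 1 ≤ j s) (hjn : ∀ s, j s ≤ n) :
    #{b : Grid m n | SndRaisable i j b} + ∑ s, i s = k * (m + 1) := by
  let wall s : Finset (Grid m n) :=
    ({x | i s ≤ (x : ℕ)} : Finset (Fin (m + 1))) ×ˢ
      ({y | (y : ℕ) + 1 = j s} : Finset (Fin (n + 1)))
  have hunion : ({b | SndRaisable i j b} : Finset (Grid m n)) = univ.biUnion wall := by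
    ext b
    simp only [wall, mem_filter, mem_univ, true_and, mem_biUnion, mem_product]
    rfl
  have hdisj : (Set.univ : Set (Fin k)).PairwiseDisjoint wall := by
    intro s _ t _ hst
    simp only [Function.onFun, wall, disjoint_left, mem_product, mem_filter]
    exact fun b hs ht => hst (hjinj (hs.2.2.symm.trans ht.2.2))
  have hcard s : #(wall s) + i s = m + 1 := by
    have hIci : ({x | i s ≤ (x : ℕ)} : Finset (Fin (m + 1))) = Ici ⟨i s, by grind⟩ := by
      ext x
      simp [Fin.le_def]
    have hsingle :
        ({y | (y : ℕ) + 1 = j s} : Finset (Fin (n + 1))) = {⟨j s - 1, by grind⟩} := by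
      ext y
      simp only [mem_filter, mem_univ, true_and, mem_singleton, Fin.ext_iff]
      grind
    simp only [wall, hIci, hsingle, product_singleton, card_map, Fin.card_Ici]
    grind
  rw [hunion, card_biUnion (by simpa using hdisj), ← sum_add_distrib,
    sum_congr rfl fun s _ => hcard s,
    sum_const, card_univ, Fintype.card_fin, smul_eq_mul]

theorem card_fstRaisable_add_sum (hiinj : Injective i) (hi1 : ∀ s, 1 ≤ i s)
    (him : ∀ s, i s ≤ m) (hjn : ∀ s, j s ≤ n) :
    #{b : Grid m n | FstRaisable i j b} + ∑ s, j s = k * (n + 1) := by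
  rw [← card_sndRaisable_add_sum (m := n) (n := m) hjn hiinj hi1 him]
  congr 1
  exact card_equiv (Equiv.prodComm _ _) fun b => by simp only [mem_filter, mem_univ, true_and]; rfl

theorem card_inversions_eq_card_sndRaisable_and_fstRaisable (hmono : StrictMono i)
    (hi1 : ∀ s, 1 ≤ i s) (him : ∀ s, i s ≤ m)
    (hjinj : Injective j) (hj1 : ∀ s, 1 ≤ j s) (hjn : ∀ s, j s ≤ n) :
    #{p : Fin k × Fin k | p.1 < p.2 ∧ j p.2 < j p.1} =
      #{b : Grid m n | SndRaisable i j b ∧ FstRaisable i j b} := by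
  refine card_bij (fun p _ => (⟨i p.2 - 1, by grind⟩, ⟨j p.1 - 1, by grind⟩)) ?_ ?_ ?_
  · simp only [mem_filter, mem_univ, true_and]
    rintro ⟨s, t⟩ ⟨hst, hj⟩
    exact ⟨⟨s, by grind [hmono hst], by grind⟩, ⟨t, by grind, by grind⟩⟩
  · rintro ⟨s, t⟩ - ⟨s', t'⟩ - h
    simp only [Prod.mk.injEq, Fin.mk.injEq] at h ⊢
    exact ⟨hjinj (by grind), hmono.injective (by grind)⟩
  · simp only [mem_filter, mem_univ, true_and]
    rintro b ⟨⟨s, hs⟩, ⟨t, ht⟩⟩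
    refine ⟨(s, t), ⟨show s < t from hmono.lt_iff_lt.1 (by omega), show j t < j s by omega⟩,
      ?_⟩
    simp only [Prod.ext_iff, Fin.ext_iff]
    omega

theorem card_raisable_add_card_inversions (hmono : StrictMono i) (hi1 : ∀ s, 1 ≤ i s)
    (him : ∀ s, i s ≤ m) (hjinj : Injective j) (hj1 : ∀ s, 1 ≤ j s)
    (hjn : ∀ s, j s ≤ n) :
    #{b : Grid m n | SndRaisable i j b ∨ FstRaisable i j b} +
        #{p : Fin k × Fin k | p.1 < p.2 ∧ j p.2 < j p.1} =
      #{b : Grid m n | SndRaisable i j b} + #{b : Grid m n | FstRaisable i j b} := by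
  rw [card_inversions_eq_card_sndRaisable_and_fstRaisable hmono hi1 him hjinj hj1 hjn, filter_or,
    filter_and, card_union_add_card_inter]

end Grid

theorem card_grid_quotient_general (m n k : ℕ)
    (i j : Fin k → ℕ)
    (hmono : StrictMono i) (hi1 : ∀ s, 1 ≤ i s) (him : ∀ s, i s ≤ m)
    (hjinj : Function.Injective j) (hj1 : ∀ s, 1 ≤ j s) (hjn : ∀ s, j s ≤ n) :
    (Set.ncard {C : Set (Grid m n) |
        ∃ a, C = {b | joinCongSup (fun s : Fin k => cg m n (i s) (j s)) a b}} : ℤ) =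
      (m + 1) * (n + 1)
        + ((Finset.univ.filter fun p : Fin k × Fin k => p.1 < p.2 ∧ j p.2 < j p.1).card : ℤ)
        - k * (m + n + 2) + ∑ s : Fin k, ((i s : ℤ) + (j s : ℤ)) := by
  have hclasses := Grid.ncard_classes_add_card_raisable hi1 him hj1 hjn
  have hraisable := congrArg (Nat.cast : ℕ → ℤ) <|
    Grid.card_raisable_add_card_inversions (m := m) (n := n) hmono hi1 him hjinj hj1 hjn
  have hsnd := Grid.card_sndRaisable_add_sum him hjinj hj1 hjn
  have hfst := Grid.card_fstRaisable_add_sum (m := m) hmono.injective hi1 him hjn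
  rw [sum_add_distrib]
  push_cast at hraisable
  zify at hclasses hsnd hfst
  linarith

/-- Let `1 ≤ i_1 < ⋯ < i_k ≤ m` and let `j_1,…,j_k` be pairwise distinct elements of
`{1,…,n}`.  For the join `β` of the join-congruences `cg(i_s, j_s)` of the grid
`K_{m,n}`, the number of `β`-classes equals
`(m+1)(n+1) + inv(τ) − k(m+n+2) + Σ_{s=1}^{k}(i_s + j_s)` (an identity of integers),
where `inv(τ)` is the number of pairs `s < t` with `j_s > j_t`. -/
theorem card_grid_quotient (m n k : ℕ) (hm : 1 ≤ m) (hn : 1 ≤ n) (hk : 1 ≤ k)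
    (i j : Fin k → ℕ)
    (hmono : StrictMono i) (hi1 : ∀ s, 1 ≤ i s) (him : ∀ s, i s ≤ m)
    (hjinj : Function.Injective j) (hj1 : ∀ s, 1 ≤ j s) (hjn : ∀ s, j s ≤ n) :
    (Set.ncard {C : Set (Grid m n) |
        ∃ a, C = {b | joinCongSup (fun s : Fin k => cg m n (i s) (j s)) a b}} : ℤ) =
      (m + 1) * (n + 1)
        + ((Finset.univ.filter fun p : Fin k × Fin k => p.1 < p.2 ∧ j p.2 < j p.1).card : ℤ)
        - k * (m + n + 2) + ∑ s : Fin k, ((i s : ℤ) + (j s : ℤ)) :=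
  card_grid_quotient_general m n k i j hmono hi1 him hjinj hj1 hjn
end

section
/- For every h ≥ 0, the number of permutations of {1,…,h} that contain no 321 pattern (i.e., no indices i < j < k with π(i) > π(j) > π(k)) equals the h-th Catalan number C_h = (1/(h+1))·binom(2h, h). -/
/-!
Send a permutation `π` to its running maximum `f i = max_{j ≤ i} π j`: a monotone map with
`i ≤ f i`, i.e. a staircase. The records (left-to-right maxima) of `π` and of `f` coincide and
carry the same values. If `π` avoids 321, its values off the records increase, so they are the
unused values listed in increasing order, and `π` is recovered from `f`. Conversely, for any
staircase `f`, placing `f i` at the records and the unused values increasingly elsewhere gives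
a 321-avoiding permutation whose running maximum is `f`. Staircases of size `n + 1` split at
their first fixed point `m` into staircases of sizes `m` and `n - m`, which is the Catalan
recursion.
-/

open Finset

variable {ι α : Type*}

def Avoids321 [Preorder ι] [Preorder α] (g : ι → α) : Prop :=
  ¬ ∃ i j k, i < j ∧ j < k ∧ g k < g j ∧ g j < g i

def IsRecord [Preorder ι] [Preorder α] (g : ι → α) (i : ι) : Prop :=
  ∀ j < i, g j < g i

def records [Preorder ι] [Preorder α] (g : ι → α) : Set ι :=
  {i | IsRecord g i}

def IsStaircase [Preorder ι] (f : ι → ι) : Prop :=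
  Monotone f ∧ ∀ i, i ≤ f i

section Records

variable [LinearOrder ι] [LinearOrder α]

theorem strictMonoOn_records (g : ι → α) : StrictMonoOn g (records g) :=
  fun _ _ _ hj hij => hj _ hij

theorem Avoids321.strictMonoOn_compl_records {g : ι → α} (hg : Avoids321 g)
    (hinj : g.Injective) : StrictMonoOn g (records g)ᶜ := by
  intro i hi j _ hij
  obtain ⟨k, hki, hik⟩ : ∃ k < i, g i ≤ g k := by simpa [records, IsRecord] using hi
  by_contra! hji
  exact hg ⟨k, i, j, hki, hij, hji.lt_of_ne (hinj.ne hij.ne'), hik.lt_of_ne (hinj.ne hki.ne')⟩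

theorem Monotone.exists_isRecord_eq [WellFoundedLT ι] {f : ι → α} (hf : Monotone f) (i : ι) :
    ∃ j ≤ i, IsRecord f j ∧ f j = f i := by
  induction i using WellFoundedLT.induction with
  | _ i ih =>
    by_cases hi : IsRecord f i
    · exact ⟨i, le_rfl, hi, rfl⟩
    obtain ⟨k, hki, hik⟩ : ∃ k < i, f i ≤ f k := by simpa [IsRecord] using hi
    obtain ⟨j, hjk, hj, hfj⟩ := ih k hki
    exact ⟨j, hjk.trans hki.le, hj, hfj.trans (le_antisymm (hf hki.le) hik)⟩

end Records

section PrefixMax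

variable [LinearOrder ι] [LocallyFiniteOrderBot ι] [LinearOrder α]

def prefixMax (g : ι → α) (i : ι) : α :=
  (Iic i).sup' nonempty_Iic g

theorem prefixMax_le_iff {g : ι → α} {i : ι} {b : α} :
    prefixMax g i ≤ b ↔ ∀ j ≤ i, g j ≤ b := by
  simp [prefixMax]

theorem le_prefixMax {g : ι → α} {i j : ι} (h : j ≤ i) : g j ≤ prefixMax g i :=
  prefixMax_le_iff.mp le_rfl j h

theorem exists_le_apply_eq_prefixMax (g : ι → α) (i : ι) :
    ∃ j ≤ i, g j = prefixMax g i := by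
  obtain ⟨j, hj, hgj⟩ := exists_mem_eq_sup' nonempty_Iic g
  exact ⟨j, mem_Iic.mp hj, hgj.symm⟩

theorem monotone_prefixMax (g : ι → α) : Monotone (prefixMax g) :=
  fun _ _ hij => prefixMax_le_iff.mpr fun _ hj => le_prefixMax (hj.trans hij)

theorem prefixMax_eq_of_isRecord {g : ι → α} {i : ι} (hi : IsRecord g i) :
    prefixMax g i = g i :=
  le_antisymm (prefixMax_le_iff.mpr fun j hj => hj.lt_or_eq.elim (fun h => (hi j h).le)
    (fun h => h ▸ le_rfl)) (le_prefixMax le_rfl)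

theorem isRecord_prefixMax_iff {g : ι → α} {i : ι} :
    IsRecord (prefixMax g) i ↔ IsRecord g i := by
  constructor
  · intro hi j hj
    obtain ⟨k, hki, hgk⟩ := exists_le_apply_eq_prefixMax g i
    obtain rfl : k = i := by
      by_contra hne
      exact (hi k (hki.lt_of_ne hne)).not_ge (hgk ▸ le_prefixMax le_rfl)
    exact (le_prefixMax le_rfl).trans_lt (hgk ▸ hi j hj)
  · intro hi j hj
    obtain ⟨k, hkj, hgk⟩ := exists_le_apply_eq_prefixMax g j
    rw [prefixMax_eq_of_isRecord hi, ← hgk]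
    exact hi k (hkj.trans_lt hj)

theorem isStaircase_prefixMax (π : Equiv.Perm ι) : IsStaircase (prefixMax π) := by
  refine ⟨monotone_prefixMax π, fun i => ?_⟩
  by_contra! hlt
  have hmaps : Set.MapsTo π (Iic i) (Iic (prefixMax π i)) :=
    fun j hj => mem_Iic.mpr (le_prefixMax (mem_Iic.mp hj))
  have := card_le_card_of_injOn π hmaps π.injective.injOn
  exact this.not_gt (card_lt_card (Iic_ssubset_Iic.mpr hlt))

end PrefixMax

theorem OrderIso.card_filter_Iic_eq [LinearOrder ι] [LocallyFiniteOrderBot ι] {p q : ι → Prop}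
    [DecidablePred p] [DecidablePred q] (e : {x // p x} ≃o {y // q y}) (x : {x // p x}) :
    #{x' ∈ Iic x.1 | p x'} = #{y ∈ Iic (e x).1 | q y} := by
  rw [← card_subtype, ← card_subtype]
  exact card_equiv e.toEquiv (by simp)

open scoped Classical in
theorem Monotone.card_filter_Iic_image_records [LinearOrder ι] [LocallyFiniteOrderBot ι]
    {f : ι → ι} (hf : Monotone f) (i : ι) :
    #{y ∈ Iic (f i) | y ∈ f '' records f} = #{j ∈ Iic i | j ∈ records f} := by
  have himage :
      {y ∈ Iic (f i) | y ∈ f '' records f} = {j ∈ Iic i | j ∈ records f}.image f := by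
    ext y
    simp only [mem_filter, mem_Iic, mem_image, Set.mem_image]
    constructor
    · rintro ⟨hy, j, hj, rfl⟩
      exact ⟨j, ⟨not_lt.mp fun hij => (hj i hij).not_ge hy, hj⟩, rfl⟩
    · rintro ⟨j, ⟨hji, hj⟩, rfl⟩
      exact ⟨hf hji, j, hj, rfl⟩
  rw [himage, card_image_of_injOn
    ((strictMonoOn_records f).injOn.mono fun _ hj => (mem_filter.mp hj).2)]

section RecordPerm

variable [LinearOrder ι] [Fintype ι]

open scoped Classical in
noncomputable def nonRecordOrderIso (f : ι → ι) :
    ↥(records f)ᶜ ≃o ↥(f '' records f)ᶜ :=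
  have hcard : Fintype.card ↥(records f)ᶜ = Fintype.card ↥(f '' records f)ᶜ := by
    rw [Fintype.card_compl_set, Fintype.card_compl_set,
      Fintype.card_congr (Equiv.Set.imageOfInjOn f _ (strictMonoOn_records f).injOn)]
  (Fintype.orderIsoFinOfCardEq _ rfl).symm.trans (Fintype.orderIsoFinOfCardEq _ hcard.symm)

open scoped Classical in
noncomputable def recordPerm (f : ι → ι) : Equiv.Perm ι :=
  Equiv.subtypeCongr (Equiv.Set.imageOfInjOn f _ (strictMonoOn_records f).injOn)
    (nonRecordOrderIso f).toEquiv

theorem recordPerm_apply_of_isRecord {f : ι → ι} {i : ι} (hi : IsRecord f i) :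
    recordPerm f i = f i := by
  classical
  rw [recordPerm, Equiv.subtypeCongr, Equiv.trans_apply, Equiv.trans_apply,
    Equiv.sumCompl_symm_apply_of_pos (show i ∈ records f from hi)]
  rfl

theorem recordPerm_apply_of_not_isRecord {f : ι → ι} {i : ι} (hi : ¬IsRecord f i) :
    recordPerm f i = nonRecordOrderIso f ⟨i, hi⟩ := by
  classical
  rw [recordPerm, Equiv.subtypeCongr, Equiv.trans_apply, Equiv.trans_apply,
    Equiv.sumCompl_symm_apply_of_neg (show i ∉ records f from hi)]
  rfl

theorem strictMonoOn_recordPerm (f : ι → ι) : StrictMonoOn (recordPerm f) (records f)ᶜ := by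
  intro i hi j hj hij
  rw [recordPerm_apply_of_not_isRecord hi, recordPerm_apply_of_not_isRecord hj]
  exact (nonRecordOrderIso f).strictMono (Subtype.mk_lt_mk.mpr hij)

end RecordPerm

section StaircaseEquiv

variable [LinearOrder ι] [Fintype ι] [LocallyFiniteOrderBot ι]

theorem IsStaircase.recordPerm_le {f : ι → ι} (hf : IsStaircase f) (i : ι) :
    recordPerm f i ≤ f i := by
  classical
  by_cases hi : IsRecord f i
  · rw [recordPerm_apply_of_isRecord hi]
  rw [recordPerm_apply_of_not_isRecord hi]
  have hiso := (nonRecordOrderIso f).card_filter_Iic_eq ⟨i, hi⟩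
  set v := nonRecordOrderIso f ⟨i, hi⟩
  by_contra! hlt
  -- With `hrec`, `i ≤ f i` leaves at least as many unused values `≤ f i` as non-records `≤ i`,
  -- while by `hiso` there are as many non-records `≤ i` as unused values `≤ v`.
  have hrec := hf.1.card_filter_Iic_image_records i
  have hle := card_le_card (Iic_subset_Iic.mpr (hf.2 i))
  have hlt' :
      #{y ∈ Iic (f i) | y ∉ f '' records f} < #{y ∈ Iic v.1 | y ∉ f '' records f} := by
    refine card_lt_card ((ssubset_iff_of_subset
      (filter_subset_filter _ (Iic_subset_Iic.mpr hlt.le))).mpr ?_)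
    exact ⟨v, mem_filter.mpr ⟨mem_Iic.mpr le_rfl, v.2⟩, by simp [hlt]⟩
  have := card_filter_add_card_filter_not (s := Iic i) (· ∈ records f)
  have := card_filter_add_card_filter_not (s := Iic (f i)) (· ∈ f '' records f)
  simp only [Set.mem_compl_iff] at hiso
  omega

theorem IsStaircase.avoids321_recordPerm {f : ι → ι} (hf : IsStaircase f) :
    Avoids321 (recordPerm f) := by
  rintro ⟨i, j, k, hij, hjk, hkj, hji⟩
  by_cases hj : IsRecord f j
  · rw [recordPerm_apply_of_isRecord hj] at hji
    exact hji.not_ge ((hf.recordPerm_le i).trans (hf.1 hij.le))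
  by_cases hk : IsRecord f k
  · rw [recordPerm_apply_of_isRecord hk] at hkj
    exact hkj.not_ge ((hf.recordPerm_le j).trans (hk j hjk).le)
  · exact hkj.not_gt (strictMonoOn_recordPerm f hj hk hjk)

theorem IsStaircase.prefixMax_recordPerm {f : ι → ι} (hf : IsStaircase f) :
    prefixMax (recordPerm f) = f := by
  funext i
  refine le_antisymm (prefixMax_le_iff.mpr fun j hj => (hf.recordPerm_le j).trans (hf.1 hj)) ?_
  obtain ⟨j, hji, hj, hfj⟩ := hf.1.exists_isRecord_eq i
  rw [← hfj, ← recordPerm_apply_of_isRecord hj]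
  exact le_prefixMax hji

theorem Avoids321.recordPerm_prefixMax {π : Equiv.Perm ι} (hπ : Avoids321 π) :
    recordPerm (prefixMax π) = π := by
  set f := prefixMax π
  have hrec (i : ι) : IsRecord f i ↔ IsRecord π i := isRecord_prefixMax_iff
  have hval {i : ι} (hi : IsRecord f i) : f i = π i := prefixMax_eq_of_isRecord ((hrec i).mp hi)
  have hmaps (i : ↥(records f)ᶜ) : π i ∈ (f '' records f)ᶜ := by
    rintro ⟨j, hj, hji⟩
    rw [hval hj] at hji
    exact i.2 (π.injective hji ▸ hj)
  have hsurj (y : ↥(f '' records f)ᶜ) : π.symm y ∈ (records f)ᶜ := fun h =>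
    y.2 ⟨_, h, (hval h).trans (π.apply_symm_apply _)⟩
  -- `π` restricts to an order isomorphism from the non-records onto the unused values, and
  -- order isomorphisms between finite linear orders are unique.
  let e : ↥(records f)ᶜ ≃o ↥(f '' records f)ᶜ :=
    StrictMono.orderIsoOfSurjective (fun i => ⟨π i, hmaps i⟩)
      (fun i j hij => hπ.strictMonoOn_compl_records π.injective (mt (hrec i).mpr i.2)
        (mt (hrec j).mpr j.2) hij)
      (fun y => ⟨⟨π.symm y, hsurj y⟩, by simp⟩)
  ext i
  by_cases hi : IsRecord f i
  · rw [recordPerm_apply_of_isRecord hi, hval hi]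
  · rw [recordPerm_apply_of_not_isRecord hi, Subsingleton.elim (nonRecordOrderIso f) e]
    rfl

noncomputable def avoids321EquivStaircase :
    {π : Equiv.Perm ι // Avoids321 π} ≃ {f : ι → ι // IsStaircase f} where
  toFun π := ⟨prefixMax π.1, isStaircase_prefixMax π.1⟩
  invFun f := ⟨recordPerm f.1, f.2.avoids321_recordPerm⟩
  left_inv π := Subtype.ext π.2.recordPerm_prefixMax
  right_inv f := Subtype.ext f.2.prefixMax_recordPerm

end StaircaseEquiv

abbrev Staircase (n : ℕ) := {f : Fin n → Fin n // IsStaircase f}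

namespace Staircase

variable {n : ℕ}

theorem val_mono (f : Staircase n) {i j : ℕ} (hi : i < n) (hj : j < n) (h : i ≤ j) :
    (f.1 ⟨i, hi⟩ : ℕ) ≤ f.1 ⟨j, hj⟩ :=
  f.2.1 (Fin.mk_le_mk.mpr h)

theorem le_val (f : Staircase n) {i : ℕ} (hi : i < n) : i ≤ f.1 ⟨i, hi⟩ :=
  f.2.2 ⟨i, hi⟩

def firstFixed (f : Staircase (n + 1)) : Fin (n + 1) :=
  ({i | f.1 i = i} : Finset _).min'
    ⟨Fin.last n, mem_filter.mpr ⟨mem_univ _, le_antisymm (Fin.le_last _) (f.2.2 _)⟩⟩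

theorem apply_firstFixed (f : Staircase (n + 1)) : f.1 (firstFixed f) = firstFixed f := by
  unfold firstFixed
  simpa using min'_mem ({i | f.1 i = i} : Finset (Fin (n + 1))) _

theorem firstFixed_le (f : Staircase (n + 1)) {i : Fin (n + 1)} (h : f.1 i = i) :
    firstFixed f ≤ i := by
  unfold firstFixed
  exact min'_le _ _ (by simpa using h)

theorem firstFixed_eq_iff {f : Staircase (n + 1)} {m : Fin (n + 1)} :
    firstFixed f = m ↔ f.1 m = m ∧ ∀ i < m, i < f.1 i := by
  have hfix {i} : i < f.1 i ↔ f.1 i ≠ i := (f.2.2 i).lt_iff_ne'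
  constructor
  · rintro rfl
    exact ⟨apply_firstFixed f, fun i hi => hfix.mpr fun h => hi.not_ge (firstFixed_le f h)⟩
  · rintro ⟨hm, hlt⟩
    refine le_antisymm (firstFixed_le f hm) (not_lt.mp fun h => ?_)
    exact hfix.mp (hlt _ h) (apply_firstFixed f)

section Decompose

variable {m : Fin (n + 1)}

theorem val_lt_of_firstFixed_eq {f : Staircase (n + 1)} (hm : firstFixed f = m)
    {i : ℕ} (hi : i < m) : i < f.1 ⟨i, by omega⟩ ∧ (f.1 ⟨i, by omega⟩ : ℕ) ≤ m := by
  obtain ⟨hfix, hlt⟩ := firstFixed_eq_iff.mp hm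
  have hle := f.2.1 (show (⟨i, by omega⟩ : Fin (n + 1)) ≤ m from hi.le)
  rw [hfix] at hle
  exact ⟨hlt ⟨i, by omega⟩ hi, hle⟩

def leftPart (f : {f : Staircase (n + 1) // firstFixed f = m}) : Staircase m :=
  ⟨fun i => ⟨f.1.1 ⟨i, by omega⟩ - 1, by have := val_lt_of_firstFixed_eq f.2 i.2; omega⟩,
    fun i j hij => by
      have := f.1.val_mono (by omega) (by omega) (Fin.le_def.mp hij)
      simp only [Fin.le_def]; omega,
    fun i => by
      have := val_lt_of_firstFixed_eq f.2 i.2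
      simp only [Fin.le_def]; omega⟩

def rightPart (f : {f : Staircase (n + 1) // firstFixed f = m}) : Staircase (n - m) :=
  ⟨fun j => ⟨f.1.1 ⟨m + 1 + j, by omega⟩ - (m + 1), by
      have := f.1.le_val (i := m + 1 + j) (by omega)
      have := (f.1.1 ⟨m + 1 + j, by omega⟩).2
      omega⟩,
    fun i j hij => by
      have := f.1.val_mono (i := m + 1 + i) (j := m + 1 + j) (by omega) (by omega)
        (by simp only [Fin.le_def] at hij; omega)
      simp only [Fin.le_def]; omega,
    fun j => by
      have := f.1.le_val (i := m + 1 + j) (by omega)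
      simp only [Fin.le_def]; omega⟩

def glueFun (g : Staircase m) (h : Staircase (n - m)) (i : Fin (n + 1)) : Fin (n + 1) :=
  if hi : (i : ℕ) < m then ⟨g.1 ⟨i, hi⟩ + 1, by omega⟩
  else if hm : (i : ℕ) = m then m
  else ⟨h.1 ⟨i - (m + 1), by omega⟩ + (m + 1), by omega⟩

variable (g : Staircase m) (h : Staircase (n - m)) {i : Fin (n + 1)}

theorem glueFun_of_lt (hi : (i : ℕ) < m) : (glueFun g h i : ℕ) = g.1 ⟨i, hi⟩ + 1 := by
  simp [glueFun, hi]

theorem glueFun_of_eq (hi : (i : ℕ) = m) : glueFun g h i = m := by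
  simp [glueFun, hi]

theorem glueFun_of_gt (hi : m < (i : ℕ)) :
    (glueFun g h i : ℕ) = h.1 ⟨i - (m + 1), by omega⟩ + (m + 1) := by
  simp [glueFun, hi.not_gt, hi.ne']

theorem monotone_glueFun : Monotone (glueFun g h) := by
  intro i j hij
  simp only [Fin.le_def] at hij ⊢
  rcases lt_trichotomy (i : ℕ) m with hi | hi | hi <;>
    rcases lt_trichotomy (j : ℕ) m with hj | hj | hj
  · rw [glueFun_of_lt g h hi, glueFun_of_lt g h hj]
    have := g.val_mono hi hj hij
    omega
  · rw [glueFun_of_lt g h hi, glueFun_of_eq g h hj]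
    have := (g.1 ⟨i, hi⟩).2
    omega
  · rw [glueFun_of_lt g h hi, glueFun_of_gt g h hj]
    have := (g.1 ⟨i, hi⟩).2
    omega
  · omega
  · rw [glueFun_of_eq g h hi, glueFun_of_eq g h hj]
  · rw [glueFun_of_eq g h hi, glueFun_of_gt g h hj]
    omega
  · omega
  · omega
  · rw [glueFun_of_gt g h hi, glueFun_of_gt g h hj]
    have := h.val_mono (i := i - (m + 1)) (j := j - (m + 1)) (by omega) (by omega) (by omega)
    omega

theorem lt_glueFun_of_lt (hi : (i : ℕ) < m) : (i : ℕ) < glueFun g h i := by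
  rw [glueFun_of_lt g h hi]
  have := g.le_val hi
  omega

theorem le_glueFun (i : Fin (n + 1)) : i ≤ glueFun g h i := by
  rw [Fin.le_def]
  rcases lt_trichotomy (i : ℕ) m with hi | hi | hi
  · exact (lt_glueFun_of_lt g h hi).le
  · rw [glueFun_of_eq g h hi, hi]
  · rw [glueFun_of_gt g h hi]
    have := h.le_val (i := i - (m + 1)) (by omega)
    omega

def glue : Staircase (n + 1) :=
  ⟨glueFun g h, monotone_glueFun g h, le_glueFun g h⟩

theorem firstFixed_glue : firstFixed (glue g h) = m :=
  firstFixed_eq_iff.mpr ⟨glueFun_of_eq g h rfl, fun _ hi => lt_glueFun_of_lt g h hi⟩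

end Decompose

def fiberEquiv (m : Fin (n + 1)) :
    {f : Staircase (n + 1) // firstFixed f = m} ≃ Staircase m × Staircase (n - m) where
  toFun f := (leftPart f, rightPart f)
  invFun p := ⟨glue p.1 p.2, firstFixed_glue p.1 p.2⟩
  left_inv := by
    rintro ⟨f, hm⟩
    refine Subtype.ext (Subtype.ext (funext fun i => Fin.ext ?_))
    show (glueFun (leftPart ⟨f, hm⟩) (rightPart ⟨f, hm⟩) i : ℕ) = f.1 i
    rcases lt_trichotomy (i : ℕ) m with hi | hi | hi
    · rw [glueFun_of_lt _ _ hi]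
      have := val_lt_of_firstFixed_eq hm hi
      simp only [leftPart, Fin.eta] at this ⊢
      omega
    · obtain rfl : i = m := Fin.ext hi
      rw [glueFun_of_eq _ _ rfl, (firstFixed_eq_iff.mp hm).1]
    · rw [glueFun_of_gt _ _ hi]
      have := f.le_val i.2
      simp only [rightPart, show (m : ℕ) + 1 + (i - (m + 1)) = i by omega, Fin.eta] at this ⊢
      omega
  right_inv := by
    rintro ⟨g, h⟩
    refine Prod.ext (Subtype.ext (funext fun i => Fin.ext ?_))
      (Subtype.ext (funext fun j => Fin.ext ?_))
    · show (glueFun g h ⟨i, _⟩ : ℕ) - 1 = g.1 i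
      rw [glueFun_of_lt g h i.2]
      simp
    · show (glueFun g h ⟨m + 1 + j, _⟩ : ℕ) - (m + 1) = h.1 j
      rw [glueFun_of_gt g h (by simp; omega)]
      simp

theorem card_eq_catalan (n : ℕ) : Nat.card (Staircase n) = catalan n := by
  induction n using Nat.strong_induction_on with
  | _ n ih =>
  cases n with
  | zero =>
    have : Nonempty (Staircase 0) := ⟨⟨finZeroElim, fun i => i.elim0, fun i => i.elim0⟩⟩
    exact (Nat.card_eq_one_iff_unique.mpr ⟨inferInstance, this⟩).trans catalan_zero.symm
  | succ n =>
    rw [← Nat.card_congr (Equiv.sigmaFiberEquiv firstFixed), Nat.card_sigma, catalan_succ]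
    refine Finset.sum_congr rfl fun m _ => ?_
    rw [Nat.card_congr (fiberEquiv m), Nat.card_prod, ih m (by omega), ih (n - m) (by omega)]

end Staircase

/-- The number of permutations of `{1,…,h}` with no 321 pattern (no `i < j < k` with
`π(i) > π(j) > π(k)`) is the `h`-th Catalan number `(1/(h+1))·binom(2h,h)`. -/
theorem card_no321_eq_catalan (h : ℕ) :
    Nat.card {π : Equiv.Perm (Fin h) //
        ¬ ∃ i j k : Fin h, i < j ∧ j < k ∧ π k < π j ∧ π j < π i} =
      Nat.choose (2 * h) h / (h + 1) := by
  rw [← Nat.centralBinom_eq_two_mul_choose, ← catalan_eq_centralBinom_div]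
  exact (Nat.card_congr avoids321EquivStaircase).trans (Staircase.card_eq_catalan h)
end

section
/- Let S be a join-semilattice, let (β_i)_{i ∈ I} be a family of join-congruences of S, and let β be their join, i.e., the smallest join-congruence of S containing every β_i. Then for u, v ∈ S, the pair (u,v) belongs to β if and only if there exist k ∈ ℕ and elements u = z_0 ≤ z_1 ≤ ⋯ ≤ z_k = w_k ≥ w_{k−1} ≥ ⋯ ≥ w_0 = v of S such that for every j ∈ {1,…,k}, both (z_{j−1}, z_j) and (w_{j−1}, w_j) belong to ⋃_{i ∈ I} β_i. -/
/-!
The zigzag relation is itself a join-congruence containing every `f i`, so it contains their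
join; conversely, each step of a zigzag lies in the join, hence so do its two ends. The only
non-obvious point is transitivity: joining the zigzag `v ⇝ x` with the peak of `u ⇝ v`, and the
zigzag `u ⇝ v` with the peak of `v ⇝ x`, extends both to the common peak, the join of the two
peaks.
-/

theorem rel_zero_of_forall_lt_rel_succ {β : Type*} {r : β → β → Prop} [Std.Refl r]
    [IsTrans β r] {z : ℕ → β} {k : ℕ} (h : ∀ j < k, r (z j) (z (j + 1))) : r (z 0) (z k) := by
  rw [← Relation.reflTransGen_eq_self (r := r)]
  exact (reflTransGen_of_succ_of_le (Function.onFun r z) (fun j hj => h j hj.2) k.zero_le).lift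
    z fun _ _ => id

section

variable {α : Type*} [SemilatticeSup α] {ι : Sort*} {f : ι → α → α → Prop}

variable (f) in
def IsUpChain (k : ℕ) (z : ℕ → α) : Prop :=
  ∀ j < k, z j ≤ z (j + 1) ∧ ∃ i, f i (z j) (z (j + 1))

def chainAppend (k : ℕ) (z z' : ℕ → α) (j : ℕ) : α :=
  if j < k then z j else z' (j - k) ⊔ z k

theorem chainAppend_of_le {k j : ℕ} {z z' : ℕ → α} (hle : z' 0 ≤ z k) (hj : j ≤ k) :
    chainAppend k z z' j = z j := by
  rcases hj.lt_or_eq with hj | rfl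
  · simp [chainAppend, hj]
  · simp [chainAppend, hle]

theorem chainAppend_add (k m : ℕ) (z z' : ℕ → α) :
    chainAppend k z z' (k + m) = z' m ⊔ z k := by
  simp [chainAppend]

namespace IsUpChain

variable {k k' : ℕ} {z z' : ℕ → α}

theorem le (h : IsUpChain f k z) : z 0 ≤ z k :=
  rel_zero_of_forall_lt_rel_succ fun j hj => (h j hj).1

theorem rel {r : α → α → Prop} (hr : Equivalence r) (hfr : ∀ i a b, f i a b → r a b)
    (h : IsUpChain f k z) : r (z 0) (z k) :=
  have := hr.stdRefl
  have := hr.isTrans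
  rel_zero_of_forall_lt_rel_succ fun j hj => (h j hj).2.elim fun i hi => hfr i _ _ hi

theorem sup_right (hf : ∀ i, IsJoinCong (f i)) (h : IsUpChain f k z) (c : α) :
    IsUpChain f k fun j => z j ⊔ c := fun j hj =>
  have ⟨hle, i, hi⟩ := h j hj
  ⟨sup_le_sup_right hle c, i, (hf i).2 _ _ c hi⟩

theorem append (hf : ∀ i, IsJoinCong (f i)) (hz : IsUpChain f k z) (hz' : IsUpChain f k' z')
    (hle : z' 0 ≤ z k) : IsUpChain f (k + k') (chainAppend k z z') := by
  intro j hj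
  rcases lt_or_ge j k with hjk | hkj
  · rw [chainAppend_of_le hle hjk.le, chainAppend_of_le hle hjk]
    exact hz j hjk
  · obtain ⟨m, rfl⟩ := Nat.exists_eq_add_of_le hkj
    rw [Nat.add_assoc, chainAppend_add, chainAppend_add]
    exact hz'.sup_right hf (z k) m (by omega)

end IsUpChain

variable (f) in
def Zigzag (u v : α) : Prop :=
  ∃ (k : ℕ) (z w : ℕ → α), z 0 = u ∧ w 0 = v ∧ z k = w k ∧ IsUpChain f k z ∧ IsUpChain f k w

namespace Zigzag

theorem of_rel (hf : ∀ i, IsJoinCong (f i)) {i : ι} {a b : α} (h : f i a b) :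
    Zigzag f a b := by
  refine ⟨1, fun j => if j = 0 then a else a ⊔ b, fun j => if j = 0 then b else a ⊔ b,
    rfl, rfl, rfl, fun j hj => ?_, fun j hj => ?_⟩ <;>
  obtain rfl : j = 0 := by omega
  · exact ⟨by simp, i, by simpa [sup_comm] using (hf i).2 a b a h⟩
  · exact ⟨by simp, i, by simpa using (hf i).2 b a b ((hf i).1.symm h)⟩

theorem symm {u v : α} : Zigzag f u v → Zigzag f v u
  | ⟨k, z, w, hz, hw, hzw, hzc, hwc⟩ => ⟨k, w, z, hw, hz, hzw.symm, hwc, hzc⟩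

theorem trans (hf : ∀ i, IsJoinCong (f i)) {u v x : α} :
    Zigzag f u v → Zigzag f v x → Zigzag f u x
  | ⟨k, z, w, hz, hw, hzw, hzc, hwc⟩, ⟨k', z', w', hz', hw', hzw', hzc', hwc'⟩ => by
    have hv_le_z : z' 0 ≤ z k := by rw [hz', ← hw, hzw]; exact hwc.le
    have hv_le_w' : w 0 ≤ w' k' := by rw [hw, ← hz', ← hzw']; exact hzc'.le
    refine ⟨k + k', chainAppend k z z', chainAppend k' w' w, ?_, ?_, ?_,
      hzc.append hf hzc' hv_le_z, Nat.add_comm k k' ▸ hwc'.append hf hwc hv_le_w'⟩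
    · rw [chainAppend_of_le hv_le_z k.zero_le, hz]
    · rw [chainAppend_of_le hv_le_w' k'.zero_le, hw']
    · rw [chainAppend_add, Nat.add_comm, chainAppend_add, hzw, hzw', sup_comm]

theorem sup_right (hf : ∀ i, IsJoinCong (f i)) {u v : α} (c : α) :
    Zigzag f u v → Zigzag f (u ⊔ c) (v ⊔ c)
  | ⟨k, z, w, hz, hw, hzw, hzc, hwc⟩ =>
    ⟨k, fun j => z j ⊔ c, fun j => w j ⊔ c, by simp [hz], by simp [hw], by simp [hzw],
      hzc.sup_right hf c, hwc.sup_right hf c⟩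

end Zigzag

theorem isJoinCong_zigzag (hf : ∀ i, IsJoinCong (f i)) : IsJoinCong (Zigzag f) :=
  ⟨⟨fun a => ⟨0, fun _ => a, fun _ => a, rfl, rfl, rfl, by simp [IsUpChain], by simp [IsUpChain]⟩,
    Zigzag.symm, Zigzag.trans hf⟩, fun _ _ c => Zigzag.sup_right hf c⟩

theorem joinCongSup_iff_zigzag' (hf : ∀ i, IsJoinCong (f i)) {u v : α} :
    joinCongSup f u v ↔ Zigzag f u v := by
  refine ⟨fun h => h _ (isJoinCong_zigzag hf) fun _ _ ⟨_, hi⟩ => Zigzag.of_rel hf hi, ?_⟩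
  rintro ⟨k, z, w, rfl, rfl, hzw, hzc, hwc⟩ r hr hfr
  have hfr' : ∀ i a b, f i a b → r a b := fun i a b hi => hfr a b ⟨i, hi⟩
  exact hr.1.trans (hzc.rel hr.1 hfr') (hzw ▸ hr.1.symm (hwc.rel hr.1 hfr'))

end

/-- Description of the join of a family of join-congruences of a join-semilattice:
`(u,v)` belongs to the join iff there are `k ∈ ℕ` and elements
`u = z_0 ≤ z_1 ≤ ⋯ ≤ z_k = w_k ≥ w_{k−1} ≥ ⋯ ≥ w_0 = v` such that each pair
`(z_{j−1}, z_j)` and `(w_{j−1}, w_j)` belongs to some member of the family. -/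
theorem joinCongSup_iff_zigzag {α : Type*} [SemilatticeSup α] {ι : Sort*}
    (f : ι → α → α → Prop) (hf : ∀ i, IsJoinCong (f i)) (u v : α) :
    joinCongSup f u v ↔
      ∃ (k : ℕ) (z w : ℕ → α),
        z 0 = u ∧ w 0 = v ∧ z k = w k ∧
        (∀ j < k, z j ≤ z (j + 1)) ∧ (∀ j < k, w j ≤ w (j + 1)) ∧
        (∀ j < k, (∃ i, f i (z j) (z (j + 1))) ∧ ∃ i, f i (w j) (w (j + 1))) := by
  rw [joinCongSup_iff_zigzag' hf]
  simp only [Zigzag, IsUpChain, forall_and, and_assoc, and_left_comm]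
end
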